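/- arXiv:1507.02732 — 12 statements merged into one kernel-verified Lean document; each statement's English description precedes it below -/
import Mathlib

section
/- Let α = (α₁, α₂) : ℝ → ℝ² be four times continuously differentiable, let t₀ ∈ ℝ, and suppose α′(t₀) = (0,0) and γ(t₀) := α₁″(t₀)α₂‴(t₀) − α₁‴(t₀)α₂″(t₀) ≠ 0. Then there exist an invertible 2×2 real matrix M and nonzero real numbers c, d such that, writing β(t) = M·(α(t) − α(t₀)), one has β₁(t) − c(t − t₀)² = o((t − t₀)²) and β₂(t) − d(t − t₀)³ = o((t − t₀)³) as t → t₀; that is, the curve has a cusp of order 3/2 at α(t₀). -/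
/-!
By Taylor's theorem, `α t - α t₀ = (t - t₀)²/2 • A + (t - t₀)³/6 • B + o((t - t₀)³)` with
`A = α″(t₀) = (a, b)` and `B = α‴(t₀) = (p, q)`, and `γ(t₀) ≠ 0` forces `A ≠ 0`. Take the rows
of `M` to be `A` and its rotation `(-b, a)`: the first coordinate starts with
`(a² + b²)/2 · (t - t₀)²`, while the rotated row kills the quadratic term and leaves
`(a q - p b)/6 · (t - t₀)³ = γ(t₀)/6 · (t - t₀)³`.
-/

open Asymptotics Filter Topology Set

section Taylor

variable {E : Type*} [NormedAddCommGroup E] [NormedSpace ℝ E] {f : ℝ → E} {t₀ : ℝ}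

theorem isLittleO_sub_taylor_two_of_deriv_eq_zero (hf : ContDiff ℝ 2 f) (hf' : deriv f t₀ = 0) :
    (fun t => f t - f t₀ - ((t - t₀) ^ 2 / 2) • iteratedDeriv 2 f t₀)
      =o[𝓝 t₀] fun t => (t - t₀) ^ 2 := by
  refine (taylor_isLittleO_univ hf).congr_left fun t => ?_
  norm_num [taylorWithinEval_succ, iteratedDerivWithin_univ, hf']
  module

theorem isLittleO_sub_taylor_three_of_deriv_eq_zero (hf : ContDiff ℝ 3 f)
    (hf' : deriv f t₀ = 0) :
    (fun t => f t - f t₀ - ((t - t₀) ^ 2 / 2) • iteratedDeriv 2 f t₀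
        - ((t - t₀) ^ 3 / 6) • iteratedDeriv 3 f t₀)
      =o[𝓝 t₀] fun t => (t - t₀) ^ 3 := by
  refine (taylor_isLittleO_univ hf).congr_left fun t => ?_
  norm_num [taylorWithinEval_succ, iteratedDerivWithin_univ, hf']
  module

end Taylor

theorem Asymptotics.IsLittleO.linear_combination_fst_snd {ι F : Type*} [SeminormedAddCommGroup F]
    {l : Filter ι} {f : ι → ℝ × ℝ} {g : ι → F} (h : f =o[l] g) (u v : ℝ) :
    (fun t => u * (f t).1 + v * (f t).2) =o[l] g :=
  ((isLittleO_prod_left.mp h).1.const_mul_left u).add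
    ((isLittleO_prod_left.mp h).2.const_mul_left v)

theorem sq_add_sq_ne_zero_of_mul_sub_mul_ne_zero {a b p q : ℝ} (h : a * q - p * b ≠ 0) :
    a ^ 2 + b ^ 2 ≠ 0 := by
  contrapose! h
  obtain ⟨rfl, rfl⟩ : a = 0 ∧ b = 0 := by constructor <;> nlinarith
  ring

/-- a C⁴ plane curve with `α′(t₀) = 0` and
`α₁″(t₀)α₂‴(t₀) − α₁‴(t₀)α₂″(t₀) ≠ 0` has a cusp of order 3/2 at `α(t₀)`:
after an invertible linear change of coordinates, the translated curve has the
local form `(c(t−t₀)² + o((t−t₀)²), d(t−t₀)³ + o((t−t₀)³))` with `c, d ≠ 0`. -/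
theorem stmt5 (α : ℝ → ℝ × ℝ) (t₀ : ℝ) (hα : ContDiff ℝ 4 α)
    (h1 : deriv α t₀ = 0)
    (h2 : (iteratedDeriv 2 α t₀).1 * (iteratedDeriv 3 α t₀).2
        - (iteratedDeriv 3 α t₀).1 * (iteratedDeriv 2 α t₀).2 ≠ 0) :
    ∃ M : Matrix (Fin 2) (Fin 2) ℝ, M.det ≠ 0 ∧
      ∃ c d : ℝ, c ≠ 0 ∧ d ≠ 0 ∧
        (fun t => M 0 0 * ((α t).1 - (α t₀).1) + M 0 1 * ((α t).2 - (α t₀).2)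
            - c * (t - t₀)^2) =o[nhds t₀] (fun t => (t - t₀)^2) ∧
        (fun t => M 1 0 * ((α t).1 - (α t₀).1) + M 1 1 * ((α t).2 - (α t₀).2)
            - d * (t - t₀)^3) =o[nhds t₀] (fun t => (t - t₀)^3) := by
  set a := (iteratedDeriv 2 α t₀).1
  set b := (iteratedDeriv 2 α t₀).2
  set p := (iteratedDeriv 3 α t₀).1
  set q := (iteratedDeriv 3 α t₀).2
  have hab := sq_add_sq_ne_zero_of_mul_sub_mul_ne_zero h2
  have hquad := (isLittleO_sub_taylor_two_of_deriv_eq_zero (hα.of_le (by norm_num)) h1)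
    |>.linear_combination_fst_snd a b
  have hcub := (isLittleO_sub_taylor_three_of_deriv_eq_zero (hα.of_le (by norm_num)) h1)
    |>.linear_combination_fst_snd (-b) a
  refine ⟨!![a, b; -b, a], ?_, (a ^ 2 + b ^ 2) / 2, (a * q - p * b) / 6,
    by simpa using hab, by simpa using h2,
    hquad.congr_left fun t => ?_, hcub.congr_left fun t => ?_⟩
  · rw [Matrix.det_fin_two_of]
    convert hab using 1
    ring
  all_goals
    simp only [Prod.fst_sub, Prod.snd_sub, Prod.smul_fst, Prod.smul_snd, smul_eq_mul,
      Matrix.of_apply, Matrix.cons_val', Matrix.cons_val_zero, Matrix.cons_val_one,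
      Matrix.cons_val_fin_one]
    ring
end

section
/- Let F be a quadratic map of the plane with coefficients aᵢ, bᵢ such that det DF(x,y) = x² + y² − 1 for all (x,y) ∈ ℝ². Then X₁₃² + X₁₄² = 1, where X_{ij} := aᵢbⱼ − aⱼbᵢ. -/
/-- if the Jacobian determinant of a quadratic map of the plane is
`x² + y² − 1`, then `X₁₃² + X₁₄² = 1`. -/
theorem stmt6 (a0 a1 a2 a3 a4 a5 b0 b1 b2 b3 b4 b5 : ℝ)
    (hdet : ∀ x y : ℝ,
      (2*a0*x + a1*y + a3) * (b1*x + 2*b2*y + b4)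
        - (a1*x + 2*a2*y + a4) * (2*b0*x + b1*y + b3) = x^2 + y^2 - 1) :
    (a1*b3 - a3*b1)^2 + (a1*b4 - a4*b1)^2 = 1 := by
  have h34 : a3*b4 - a4*b3 = -1 := by linear_combination hdet 0 0
  have hxx : 2*(a0*b1 - a1*b0) = 1 := by
    linear_combination (hdet 1 0 + hdet (-1) 0)/2 - hdet 0 0
  have hyy : 2*(a1*b2 - a2*b1) = 1 := by
    linear_combination (hdet 0 1 + hdet 0 (-1))/2 - hdet 0 0
  have hxy : 4*(a0*b2 - a2*b0) = 0 := by
    linear_combination hdet 1 1 - hdet 1 0 - hdet 0 1 + hdet 0 0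
  have hx : 2*a0*b4 + a3*b1 - a1*b3 - 2*a4*b0 = 0 := by
    linear_combination (hdet 1 0 - hdet (-1) 0)/2
  have hy : a1*b4 + 2*a3*b2 - 2*a2*b3 - a4*b1 = 0 := by
    linear_combination (hdet 0 1 - hdet 0 (-1))/2
  linear_combination
    (1 - (a1*b4 - a4*b1)^2) * hxx
    + ((a1*b3 - a3*b1)*(a1*b4 - a4*b1)) * hxy
    + (2*(a0*b1 - a1*b0)*(a1*b4 - a4*b1)) * hy
    + (-2*(a0*b3 - a3*b0)*(a1*b4 - a4*b1)) * hyy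
    + (-(2*(a0*b1 - a1*b0))) * h34
    + (-(a1*b3 - a3*b1)) * hx
end

section
/- Let F be a quadratic map of the plane with coefficients aᵢ, bᵢ such that det DF(x,y) = xy − 1 for all (x,y) ∈ ℝ², and define α(t) = F(t, 1/t) for t ≠ 0. Then X₃₀ := a₃b₀ − a₀b₃ ≠ 0; setting T = (−1/(2X₃₀))^{1/3} (the real cube root), one has for t ≠ 0 that α′(t) = (0,0) if and only if t = T; and α₁″(T)α₂‴(T) − α₁‴(T)α₂″(T) ≠ 0, so the image of the branch containing (T, 1/T) has a single nondegenerate cusp. -/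
/-!
Write `pᵢ = (aᵢ, bᵢ)`, so that `X_{ij} = pᵢ × pⱼ`. Comparing coefficients in `det DF = xy - 1`
gives `X₀₁ = X₁₂ = 0`, `X₀₂ = 1/4`, `X₃₄ = -1` and two linear relations; with the Plücker
relations among the `X_{ij}` these yield `X₀₄ = X₂₃ = 0` and `X₀₃ X₂₄ = -1/4`, so `X₀₃ ≠ 0`.

Off `t = 0`, `α` is the Laurent polynomial `t² p₀ + t p₃ + (p₁ + p₅) + t⁻¹ p₄ + t⁻² p₂`, hence
`t³ α'(t) = 2t⁴ p₀ + t³ p₃ - t p₄ - 2 p₂`. Its cross product with `p₀` is `X₀₃ t³ - 1/2`, which pins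
down `t³`; at that `t` its cross product with `p₂` vanishes as well. Similarly
`T⁹ (α'' × α''')(T) = -12 T⁴ + 12 T X₂₄ = -18 T⁴ ≠ 0`.
-/

open Finset Set

section Laurent

variable {E : Type*} [NormedAddCommGroup E] [NormedSpace ℝ E]

theorem iteratedDeriv_eqOn_of_hasDerivAt {f : ℝ → E} {g : ℕ → ℝ → E} {U : Set ℝ}
    (hU : IsOpen U) (h₀ : EqOn f (g 0) U)
    (hg : ∀ k, ∀ x ∈ U, HasDerivAt (g k) (g (k + 1) x) x) :
    ∀ k, EqOn (iteratedDeriv k f) (g k) U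
  | 0 => by simpa using h₀
  | k + 1 => fun x hx => by
    rw [iteratedDeriv_succ]
    have hk : iteratedDeriv k f =ᶠ[nhds x] g k := Filter.eventuallyEq_of_mem (hU.mem_nhds hx)
      (iteratedDeriv_eqOn_of_hasDerivAt hU h₀ hg k)
    exact hk.deriv_eq.trans (hg k x hx).deriv

variable {ι : Type*} [Fintype ι]

/-- The `k`-th derivative of the Laurent polynomial `x ↦ ∑ i, x ^ e i • c i`, away from `0`. -/
noncomputable def laurentIteratedDeriv (e : ι → ℤ) (c : ι → E) (k : ℕ) (x : ℝ) : E :=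
  ∑ i, ((∏ j ∈ range k, ((e i : ℝ) - j)) * x ^ (e i - k)) • c i

theorem hasDerivAt_laurentIteratedDeriv (e : ι → ℤ) (c : ι → E) (k : ℕ) {x : ℝ} (hx : x ≠ 0) :
    HasDerivAt (laurentIteratedDeriv e c k) (laurentIteratedDeriv e c (k + 1) x) x := by
  refine HasDerivAt.fun_sum fun i _ => ?_
  have := ((hasDerivAt_zpow (e i - k) x (.inl hx)).const_mul
    (∏ j ∈ range k, ((e i : ℝ) - j))).smul_const (c i)
  convert this using 2
  rw [prod_range_succ]
  push_cast
  ring_nf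

theorem iteratedDeriv_eqOn_laurentIteratedDeriv {f : ℝ → E} {e : ι → ℤ} {c : ι → E}
    (hf : EqOn f (laurentIteratedDeriv e c 0) {0}ᶜ) (k : ℕ) :
    EqOn (iteratedDeriv k f) (laurentIteratedDeriv e c k) {0}ᶜ :=
  iteratedDeriv_eqOn_of_hasDerivAt isOpen_compl_singleton hf
    (fun k _ hx => hasDerivAt_laurentIteratedDeriv e c k hx) k

end Laurent

namespace PlaneQuadraticMap

def cross : ℝ × ℝ →ₗ[ℝ] ℝ × ℝ →ₗ[ℝ] ℝ :=
  LinearMap.mk₂ ℝ (fun u v => u.1 * v.2 - u.2 * v.1)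
    (fun _ _ _ => by simp only [Prod.fst_add, Prod.snd_add]; ring)
    (fun _ _ _ => by simp only [Prod.smul_fst, Prod.smul_snd, smul_eq_mul]; ring)
    (fun _ _ _ => by simp only [Prod.fst_add, Prod.snd_add]; ring)
    (fun _ _ _ => by simp only [Prod.smul_fst, Prod.smul_snd, smul_eq_mul]; ring)

theorem cross_apply (u v : ℝ × ℝ) : cross u v = u.1 * v.2 - u.2 * v.1 := rfl

@[simp]
theorem cross_self (u : ℝ × ℝ) : cross u u = 0 := by
  rw [cross_apply]; ring

theorem cross_swap (u v : ℝ × ℝ) : cross v u = -cross u v := by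
  simp only [cross_apply]; ring

theorem cross_plucker (u v w z : ℝ × ℝ) :
    cross u v * cross w z - cross u w * cross v z + cross u z * cross v w = 0 := by
  simp only [cross_apply]; ring

theorem eq_zero_of_cross_eq_zero {u v w : ℝ × ℝ} (huv : cross u v ≠ 0) (hu : cross u w = 0)
    (hv : cross v w = 0) : w = 0 := by
  have h1 : cross u v * w.1 = 0 := by
    simp only [cross_apply] at *; linear_combination v.1 * hu - u.1 * hv
  have h2 : cross u v * w.2 = 0 := by
    simp only [cross_apply] at *; linear_combination v.2 * hu - u.2 * hv
  exact Prod.ext ((mul_eq_zero.mp h1).resolve_left huv) ((mul_eq_zero.mp h2).resolve_left huv)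

/-- The map `(x, y) ↦ x² p₀ + xy p₁ + y² p₂ + x p₃ + y p₄ + p₅`, so that `p i = (aᵢ, bᵢ)` and
`cross (p i) (p j) = X_{ij}`. -/
def eval (p : Fin 6 → ℝ × ℝ) (x y : ℝ) : ℝ × ℝ :=
  x ^ 2 • p 0 + (x * y) • p 1 + y ^ 2 • p 2 + x • p 3 + y • p 4 + p 5

/-- `det DF(x, y) = x y - 1`, with the partial derivatives of `eval p` written out. -/
def HasJacobianXYSubOne (p : Fin 6 → ℝ × ℝ) : Prop :=
  ∀ x y : ℝ, cross ((2 * x) • p 0 + y • p 1 + p 3) (x • p 1 + (2 * y) • p 2 + p 4) = x * y - 1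

noncomputable def hyperbolaCurve (p : Fin 6 → ℝ × ℝ) (t : ℝ) : ℝ × ℝ :=
  eval p t t⁻¹

section Derivatives

variable (p : Fin 6 → ℝ × ℝ) {t : ℝ}

theorem iteratedDeriv_hyperbolaCurve_eqOn (k : ℕ) :
    EqOn (iteratedDeriv k (hyperbolaCurve p))
      (laurentIteratedDeriv ![2, 1, 0, -1, -2] ![p 0, p 3, p 1 + p 5, p 4, p 2] k) {0}ᶜ := by
  refine iteratedDeriv_eqOn_laurentIteratedDeriv (fun t (ht : t ≠ 0) => ?_) k
  simp only [hyperbolaCurve, eval, laurentIteratedDeriv, Fin.sum_univ_five, prod_range_zero,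
    Matrix.cons_val]
  match_scalars <;> norm_num
  field_simp

theorem smul_deriv_hyperbolaCurve (ht : t ≠ 0) :
    t ^ 3 • deriv (hyperbolaCurve p) t
      = (2 * t ^ 4) • p 0 + t ^ 3 • p 3 - t • p 4 - (2 : ℝ) • p 2 := by
  rw [← iteratedDeriv_one, iteratedDeriv_hyperbolaCurve_eqOn p 1 ht]
  simp only [laurentIteratedDeriv, Fin.sum_univ_five, prod_range_succ, prod_range_zero,
    Matrix.cons_val]
  match_scalars <;> norm_num <;> field_simp

theorem smul_iteratedDeriv_two_hyperbolaCurve (ht : t ≠ 0) :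
    t ^ 4 • iteratedDeriv 2 (hyperbolaCurve p) t
      = (2 * t ^ 4) • p 0 + (2 * t) • p 4 + (6 : ℝ) • p 2 := by
  rw [iteratedDeriv_hyperbolaCurve_eqOn p 2 ht]
  simp only [laurentIteratedDeriv, Fin.sum_univ_five, prod_range_succ, prod_range_zero,
    Matrix.cons_val]
  match_scalars <;> norm_num <;> field_simp

theorem smul_iteratedDeriv_three_hyperbolaCurve (ht : t ≠ 0) :
    t ^ 5 • iteratedDeriv 3 (hyperbolaCurve p) t = -(6 * t) • p 4 - (24 : ℝ) • p 2 := by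
  rw [iteratedDeriv_hyperbolaCurve_eqOn p 3 ht]
  simp only [laurentIteratedDeriv, Fin.sum_univ_five, prod_range_succ, prod_range_zero,
    Matrix.cons_val]
  match_scalars <;> norm_num <;> field_simp

end Derivatives

namespace HasJacobianXYSubOne

variable {p : Fin 6 → ℝ × ℝ}

theorem coeff_relations (hp : HasJacobianXYSubOne p) :
    cross (p 0) (p 1) = 0 ∧ cross (p 0) (p 2) = 1 / 4 ∧ cross (p 1) (p 2) = 0 ∧
      2 * cross (p 0) (p 4) + cross (p 3) (p 1) = 0 ∧
      cross (p 1) (p 4) + 2 * cross (p 3) (p 2) = 0 ∧ cross (p 3) (p 4) = -1 := by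
  have h00 := hp 0 0
  have h10 := hp 1 0
  have h10' := hp (-1) 0
  have h01 := hp 0 1
  have h01' := hp 0 (-1)
  have h11 := hp 1 1
  simp only [cross_apply, Prod.fst_add, Prod.snd_add, Prod.smul_fst, Prod.smul_snd, smul_eq_mul]
    at *
  refine ⟨?_, ?_, ?_, ?_, ?_, ?_⟩
  · linear_combination (h10 + h10') / 4 - h00 / 2
  · linear_combination h11 / 4 - h10 / 4 - h01 / 4 + h00 / 4
  · linear_combination (h01 + h01') / 4 - h00 / 2
  · linear_combination (h10 - h10') / 2
  · linear_combination (h01 - h01') / 2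
  · linear_combination h00

theorem cross_zero_two (hp : HasJacobianXYSubOne p) : cross (p 0) (p 2) = 1 / 4 :=
  hp.coeff_relations.2.1

theorem cross_zero_four (hp : HasJacobianXYSubOne p) : cross (p 0) (p 4) = 0 := by
  obtain ⟨h01, h02, h12, h0431, -, -⟩ := hp.coeff_relations
  have h13 : cross (p 1) (p 3) = 0 := by
    linear_combination -4 * cross_plucker (p 0) (p 1) (p 2) (p 3)
      + 4 * cross (p 2) (p 3) * h01 + 4 * cross (p 0) (p 3) * h12 - 4 * cross (p 1) (p 3) * h02
  linear_combination h0431 / 2 + h13 / 2 - cross_swap (p 1) (p 3) / 2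

theorem cross_two_three (hp : HasJacobianXYSubOne p) : cross (p 2) (p 3) = 0 := by
  obtain ⟨h01, h02, h12, -, h1432, -⟩ := hp.coeff_relations
  have h14 : cross (p 1) (p 4) = 0 := by
    linear_combination -4 * cross_plucker (p 0) (p 1) (p 2) (p 4)
      + 4 * cross (p 2) (p 4) * h01 + 4 * cross (p 0) (p 4) * h12 - 4 * cross (p 1) (p 4) * h02
  linear_combination h14 / 2 - h1432 / 2 + cross_swap (p 2) (p 3)

theorem cross_zero_three_mul_cross_two_four (hp : HasJacobianXYSubOne p) :
    cross (p 0) (p 3) * cross (p 2) (p 4) = -1 / 4 := by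
  linear_combination -cross_plucker (p 0) (p 2) (p 3) (p 4) + cross (p 3) (p 4) * hp.cross_zero_two
    + cross (p 2) (p 3) * hp.cross_zero_four + hp.coeff_relations.2.2.2.2.2 / 4

theorem cross_zero_three_ne_zero (hp : HasJacobianXYSubOne p) : cross (p 0) (p 3) ≠ 0 := by
  intro h
  have := hp.cross_zero_three_mul_cross_two_four
  rw [h, zero_mul] at this
  norm_num at this

theorem cross_two_four_eq (hp : HasJacobianXYSubOne p) {t : ℝ}
    (ht : 2 * cross (p 0) (p 3) * t ^ 3 = 1) : cross (p 2) (p 4) = -t ^ 3 / 2 := by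
  linear_combination 2 * t ^ 3 * hp.cross_zero_three_mul_cross_two_four - cross (p 2) (p 4) * ht

theorem deriv_hyperbolaCurve_eq_zero_iff (hp : HasJacobianXYSubOne p) {t : ℝ} (ht : t ≠ 0) :
    deriv (hyperbolaCurve p) t = 0 ↔ 2 * cross (p 0) (p 3) * t ^ 3 = 1 := by
  set P := (2 * t ^ 4) • p 0 + t ^ 3 • p 3 - t • p 4 - (2 : ℝ) • p 2
  have hP : deriv (hyperbolaCurve p) t = 0 ↔ P = 0 := by
    rw [← smul_eq_zero_iff_right (pow_ne_zero 3 ht), smul_deriv_hyperbolaCurve p ht]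
  have h0 : cross (p 0) P = t ^ 3 * cross (p 0) (p 3) - 1 / 2 := by
    simp only [P, map_add, map_sub, map_smul, cross_self, smul_eq_mul]
    linear_combination -t * hp.cross_zero_four - 2 * hp.cross_zero_two
  rw [hP]
  constructor
  · intro h
    rw [h, map_zero] at h0
    linear_combination -2 * h0
  · intro h
    have h24 := hp.cross_two_four_eq h
    have h2 : cross (p 2) P = 0 := by
      simp only [P, map_add, map_sub, map_smul, cross_self, smul_eq_mul]
      linear_combination 2 * t ^ 4 * (cross_swap (p 0) (p 2)) - 2 * t ^ 4 * hp.cross_zero_two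
        + t ^ 3 * hp.cross_two_three - t * h24
    refine eq_zero_of_cross_eq_zero (by rw [hp.cross_zero_two]; norm_num) ?_ h2
    linear_combination h0 + h / 2

theorem cross_iteratedDeriv_hyperbolaCurve_ne_zero (hp : HasJacobianXYSubOne p) {T : ℝ}
    (hT : 2 * cross (p 0) (p 3) * T ^ 3 = 1) :
    cross (iteratedDeriv 2 (hyperbolaCurve p) T) (iteratedDeriv 3 (hyperbolaCurve p) T) ≠ 0 := by
  have hT0 : T ≠ 0 := by rintro rfl; norm_num at hT
  have key : T ^ 9 * cross (iteratedDeriv 2 (hyperbolaCurve p) T)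
      (iteratedDeriv 3 (hyperbolaCurve p) T) = -18 * T ^ 4 :=
    calc _ = cross (T ^ 4 • iteratedDeriv 2 (hyperbolaCurve p) T)
          (T ^ 5 • iteratedDeriv 3 (hyperbolaCurve p) T) := by
            simp only [map_smul, LinearMap.smul_apply, smul_eq_mul]; ring
      _ = cross ((2 * T ^ 4) • p 0 + (2 * T) • p 4 + (6 : ℝ) • p 2)
          (-(6 * T) • p 4 - (24 : ℝ) • p 2) := by
            rw [smul_iteratedDeriv_two_hyperbolaCurve p hT0,
              smul_iteratedDeriv_three_hyperbolaCurve p hT0]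
      _ = -18 * T ^ 4 := by
            simp only [map_add, map_sub, map_smul, LinearMap.add_apply, LinearMap.smul_apply,
              cross_self, smul_eq_mul]
            linear_combination -12 * T ^ 5 * hp.cross_zero_four - 48 * T ^ 4 * hp.cross_zero_two
              - 48 * T * cross_swap (p 2) (p 4) + 12 * T * hp.cross_two_four_eq hT
  intro h
  rw [h, mul_zero] at key
  exact hT0 (pow_eq_zero_iff (n := 4) (by norm_num) |>.mp (by linarith))

end HasJacobianXYSubOne

end PlaneQuadraticMap

open PlaneQuadraticMap in
/-- if a quadratic map `F` of the plane has Jacobian determinant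
`xy − 1` (so `J₀` is the hyperbola `xy = 1`), and `α(t) = F(t, 1/t)` for `t ≠ 0`,
then `X₃₀ = a₃b₀ − a₀b₃ ≠ 0`, and for the real cube root `T` of `−1/(2X₃₀)`
(i.e. the unique `T` with `T³ = −1/(2X₃₀)`), `α′(t) = 0` (for `t ≠ 0`) iff `t = T`,
and `α₁″(T)α₂‴(T) − α₁‴(T)α₂″(T) ≠ 0`, i.e. the cusp there is nondegenerate. -/
theorem stmt8 (a0 a1 a2 a3 a4 a5 b0 b1 b2 b3 b4 b5 : ℝ)
    (hdet : ∀ x y : ℝ,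
      (2*a0*x + a1*y + a3) * (b1*x + 2*b2*y + b4)
        - (a1*x + 2*a2*y + a4) * (2*b0*x + b1*y + b3) = x*y - 1)
    (α : ℝ → ℝ × ℝ)
    (hα : α = fun t =>
      (a0*t^2 + a1*t*(1/t) + a2*(1/t)^2 + a3*t + a4*(1/t) + a5,
       b0*t^2 + b1*t*(1/t) + b2*(1/t)^2 + b3*t + b4*(1/t) + b5)) :
    a3*b0 - a0*b3 ≠ 0 ∧
    ∀ T : ℝ, T^3 = -1/(2*(a3*b0 - a0*b3)) →
      (∀ t : ℝ, t ≠ 0 → (deriv α t = 0 ↔ t = T)) ∧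
      (iteratedDeriv 2 α T).1 * (iteratedDeriv 3 α T).2
        - (iteratedDeriv 3 α T).1 * (iteratedDeriv 2 α T).2 ≠ 0 := by
  set p : Fin 6 → ℝ × ℝ := ![(a0, b0), (a1, b1), (a2, b2), (a3, b3), (a4, b4), (a5, b5)]
  have hp : HasJacobianXYSubOne p := fun x y => by
    simp only [p, cross_apply, Matrix.cons_val, Prod.fst_add, Prod.snd_add, Prod.smul_fst,
      Prod.smul_snd, smul_eq_mul]
    linear_combination hdet x y
  have hα' : α = hyperbolaCurve p := by
    subst hα
    funext t
    ext <;> simp only [p, hyperbolaCurve, eval, Matrix.cons_val, Prod.fst_add, Prod.snd_add,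
      Prod.smul_fst, Prod.smul_snd, smul_eq_mul] <;> ring
  have hX : cross (p 0) (p 3) = -(a3*b0 - a0*b3) := by
    simp only [p, cross_apply, Matrix.cons_val]; ring
  have hX30 : a3*b0 - a0*b3 ≠ 0 := neg_ne_zero.mp (hX ▸ hp.cross_zero_three_ne_zero)
  refine ⟨hX30, fun T hT => ?_⟩
  have hT' : 2 * cross (p 0) (p 3) * T ^ 3 = 1 := by
    rw [hX, hT]; field_simp
  refine ⟨fun t ht => ?_, ?_⟩
  · rw [hα', hp.deriv_hyperbolaCurve_eq_zero_iff ht, ← hT',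
      mul_right_inj' (mul_ne_zero two_ne_zero hp.cross_zero_three_ne_zero),
      Odd.pow_inj (by decide)]
  · have := hp.cross_iteratedDeriv_hyperbolaCurve_ne_zero hT'
    rwa [← hα', cross_apply, mul_comm (iteratedDeriv 2 α T).2] at this
end

section
/- Let F be a quadratic map of the plane with coefficients aᵢ, bᵢ such that det DF(x,y) = xy for all (x,y) ∈ ℝ². Then a₁ = 0, b₁ = 0, X₀₄ = X₂₃ = 0, and X₀₃·X₂₄ = 0, where X_{ij} := aᵢbⱼ − aⱼbᵢ. Consequently at least one of the two branches of the critical image (the image under F of one of the coordinate axes) is a ray rather than a parabola. -/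
/-- A subset of the plane is a ray if it has the form `{p + s•v : s ≥ 0}` with `v ≠ 0`. -/
def IsRay (S : Set (ℝ × ℝ)) : Prop :=
  ∃ p v : ℝ × ℝ, v ≠ 0 ∧ S = {q : ℝ × ℝ | ∃ s : ℝ, 0 ≤ s ∧ q = p + s • v}

lemma ray_aux (A B C D E F : ℝ) (hv : (A, B) ≠ (0 : ℝ × ℝ))
    (hl : ∃ l : ℝ, C = l * A ∧ D = l * B) :
    IsRay {q : ℝ × ℝ | ∃ t : ℝ, q = (A*t^2 + C*t + E, B*t^2 + D*t + F)} := by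
  obtain ⟨l, hC, hD⟩ := hl
  subst hC; subst hD
  refine ⟨(E - l^2/4*A, F - l^2/4*B), (A, B), hv, ?_⟩
  ext q
  simp only [Set.mem_setOf_eq]
  constructor
  · rintro ⟨t, rfl⟩
    refine ⟨(t + l/2)^2, sq_nonneg _, ?_⟩
    simp only [Prod.mk_add_mk, Prod.smul_mk, smul_eq_mul, Prod.mk.injEq]
    constructor <;> ring
  · rintro ⟨s, hs, rfl⟩
    refine ⟨Real.sqrt s - l/2, ?_⟩
    have h2 : (Real.sqrt s - l/2)^2 + l * (Real.sqrt s - l/2) = s - l^2/4 := by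
      have hss := Real.sq_sqrt hs
      linear_combination hss
    simp only [Prod.mk_add_mk, Prod.smul_mk, smul_eq_mul, Prod.mk.injEq]
    constructor
    · linear_combination A * h2 - 2*A*Real.sq_sqrt hs
    · linear_combination B * h2 - 2*B*Real.sq_sqrt hs

/-- if a quadratic map `F` of the plane has Jacobian determinant `xy`
(so `J₀` is the union of the coordinate axes), then `a₁ = 0`, `b₁ = 0`,
`X₀₄ = X₂₃ = 0` and `X₀₃·X₂₄ = 0`; consequently at least one of the two branches
of the critical image (the image of one of the coordinate axes) is a ray. -/
theorem stmt9 (a0 a1 a2 a3 a4 a5 b0 b1 b2 b3 b4 b5 : ℝ)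
    (hdet : ∀ x y : ℝ,
      (2*a0*x + a1*y + a3) * (b1*x + 2*b2*y + b4)
        - (a1*x + 2*a2*y + a4) * (2*b0*x + b1*y + b3) = x*y) :
    a1 = 0 ∧ b1 = 0 ∧ a0*b4 - a4*b0 = 0 ∧ a2*b3 - a3*b2 = 0 ∧
    (a0*b3 - a3*b0) * (a2*b4 - a4*b2) = 0 ∧
    (IsRay {q : ℝ × ℝ | ∃ t : ℝ, q = (a2*t^2 + a4*t + a5, b2*t^2 + b4*t + b5)} ∨
     IsRay {q : ℝ × ℝ | ∃ t : ℝ, q = (a0*t^2 + a3*t + a5, b0*t^2 + b3*t + b5)}) := by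
  have e1 := hdet 0 0
  have e2 := hdet 1 0
  have e3 := hdet (-1) 0
  have e4 := hdet 0 1
  have e5 := hdet 0 (-1)
  have e6 := hdet 1 1
  -- coefficient equations
  have hc00 : a3*b4 - a4*b3 = 0 := by linear_combination e1
  have hc20 : a0*b1 - a1*b0 = 0 := by linear_combination (1/4)*e2 + (1/4)*e3 - (1/2)*e1
  have hc02 : a1*b2 - a2*b1 = 0 := by linear_combination (1/4)*e4 + (1/4)*e5 - (1/2)*e1
  have hc10 : 2*(a0*b4 - a4*b0) + a3*b1 - a1*b3 = 0 := by
    linear_combination (1/2)*e2 - (1/2)*e3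
  have hc01 : 2*(a3*b2 - a2*b3) + a1*b4 - a4*b1 = 0 := by
    linear_combination (1/2)*e4 - (1/2)*e5
  have hc11 : a0*b2 - a2*b0 = 1/4 := by
    linear_combination (1/4)*e6 - (1/4)*e2 - (1/4)*e4 + (1/4)*e1
  have ha1 : a1 = 0 := by
    linear_combination (-4*a1)*hc11 + 4*a0*hc02 + 4*a2*hc20
  have hb1 : b1 = 0 := by
    linear_combination (-4*b1)*hc11 + 4*b2*hc20 + 4*b0*hc02
  have h04 : a0*b4 - a4*b0 = 0 := by
    linear_combination (1/2)*hc10 - (a3/2)*hb1 + (b3/2)*ha1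
  have h23 : a2*b3 - a3*b2 = 0 := by
    linear_combination (-1/2)*hc01 + (b4/2)*ha1 - (a4/2)*hb1
  have hprod : (a0*b3 - a3*b0) * (a2*b4 - a4*b2) = 0 := by
    linear_combination (a2*b3 - a3*b2)*h04 + (a3*b4 - a4*b3)*hc11 + (1/4)*hc00
  refine ⟨ha1, hb1, h04, h23, hprod, ?_⟩
  have hv2 : (a2, b2) ≠ (0 : ℝ × ℝ) := by
    intro h
    rw [Prod.ext_iff] at h
    simp at h
    rw [h.1, h.2] at hc11; norm_num at hc11
  have hv0 : (a0, b0) ≠ (0 : ℝ × ℝ) := by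
    intro h
    rw [Prod.ext_iff] at h
    simp at h
    rw [h.1, h.2] at hc11; norm_num at hc11
  rcases mul_eq_zero.mp hprod with h03 | h24
  · right
    refine ray_aux _ _ _ _ _ _ hv0 ?_
    by_cases ha : a0 = 0
    · have hb : b0 ≠ 0 := by
        intro hb; exact hv0 (by simp [ha, hb, Prod.ext_iff])
      have : a3 = 0 := by
        have : a3 * b0 = 0 := by linear_combination -h03 + b3*ha
        exact (mul_eq_zero.mp this).resolve_right hb
      exact ⟨b3 / b0, by rw [this, ha]; ring, by field_simp⟩
    · refine ⟨a3 / a0, by field_simp, ?_⟩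
      rw [div_mul_eq_mul_div, eq_div_iff ha]
      linear_combination h03
  · left
    refine ray_aux _ _ _ _ _ _ hv2 ?_
    by_cases ha : a2 = 0
    · have hb : b2 ≠ 0 := by
        intro hb; exact hv2 (by simp [ha, hb, Prod.ext_iff])
      have : a4 = 0 := by
        have : a4 * b2 = 0 := by linear_combination -h24 + b4*ha
        exact (mul_eq_zero.mp this).resolve_right hb
      exact ⟨b4 / b2, by rw [this, ha]; ring, by field_simp⟩
    · refine ⟨a4 / a2, by field_simp, ?_⟩
      rw [div_mul_eq_mul_div, eq_div_iff ha]
      linear_combination h24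
end

section
/- Let F be a quadratic map of the plane with coefficients aᵢ, bᵢ such that det DF(x,y) = x² − 1 for all (x,y) ∈ ℝ². Then a₂ = b₂ = 0, X₁₃² = 1 where X₁₃ := a₁b₃ − a₃b₁, and exactly one of the following holds: (i) F is constant on the line {x = −1} and the image F({x = 1}) is an affine line {p + t·v : t ∈ ℝ} for some p ∈ ℝ² and nonzero v ∈ ℝ²; or (ii) F is constant on the line {x = 1} and F({x = −1}) is an affine line. Hence the critical image is the union of a line and a point. -/
/-- Helper: behaviour of the quadratic map (with no `y²` terms) on vertical lines:
constant on `x = c`, an affine line on `x = d`, and non-constant on `x = d`. -/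
lemma stmt11_aux (a0 a1 a3 a4 a5 b0 b1 b3 b4 b5 c d : ℝ)
    (h1 : a1*c + a4 = 0) (h2 : b1*c + b4 = 0)
    (h3 : a1*d + a4 ≠ 0 ∨ b1*d + b4 ≠ 0) :
    ((∀ y₁ y₂ : ℝ,
        (a0*c^2 + a1*c*y₁ + (0:ℝ)*y₁^2 + a3*c + a4*y₁ + a5,
         b0*c^2 + b1*c*y₁ + (0:ℝ)*y₁^2 + b3*c + b4*y₁ + b5)
        = (a0*c^2 + a1*c*y₂ + (0:ℝ)*y₂^2 + a3*c + a4*y₂ + a5,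
         b0*c^2 + b1*c*y₂ + (0:ℝ)*y₂^2 + b3*c + b4*y₂ + b5)) ∧
      ∃ p v : ℝ × ℝ, v ≠ 0 ∧
        {q : ℝ × ℝ | ∃ y : ℝ, q =
          (a0*d^2 + a1*d*y + (0:ℝ)*y^2 + a3*d + a4*y + a5,
           b0*d^2 + b1*d*y + (0:ℝ)*y^2 + b3*d + b4*y + b5)}
        = {q : ℝ × ℝ | ∃ t : ℝ, q = p + t • v}) ∧
    ¬ (∀ y₁ y₂ : ℝ,
        (a0*d^2 + a1*d*y₁ + (0:ℝ)*y₁^2 + a3*d + a4*y₁ + a5,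
         b0*d^2 + b1*d*y₁ + (0:ℝ)*y₁^2 + b3*d + b4*y₁ + b5)
        = (a0*d^2 + a1*d*y₂ + (0:ℝ)*y₂^2 + a3*d + a4*y₂ + a5,
         b0*d^2 + b1*d*y₂ + (0:ℝ)*y₂^2 + b3*d + b4*y₂ + b5)) := by
  refine ⟨⟨?_, ?_⟩, ?_⟩
  · intro y₁ y₂
    simp only [Prod.mk.injEq]
    constructor
    · linear_combination (y₁ - y₂) * h1
    · linear_combination (y₁ - y₂) * h2
  · refine ⟨(a0*d^2 + a3*d + a5, b0*d^2 + b3*d + b5), (a1*d + a4, b1*d + b4), ?_, ?_⟩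
    · intro hv
      rw [Prod.ext_iff] at hv
      rcases h3 with h | h
      · exact h hv.1
      · exact h hv.2
    · ext q
      simp only [Set.mem_setOf_eq]
      constructor
      · rintro ⟨y, rfl⟩
        refine ⟨y, ?_⟩
        simp only [Prod.smul_mk, smul_eq_mul, Prod.mk_add_mk, Prod.mk.injEq]
        constructor <;> ring
      · rintro ⟨t, rfl⟩
        refine ⟨t, ?_⟩
        simp only [Prod.smul_mk, smul_eq_mul, Prod.mk_add_mk, Prod.mk.injEq]
        constructor <;> ring
  · intro hall
    have h01 := hall 0 1
    rw [Prod.mk.injEq] at h01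
    rcases h3 with h | h
    · exact h (by linear_combination -h01.1)
    · exact h (by linear_combination -h01.2)

/-- if a quadratic map `F` of the plane has Jacobian determinant
`x² − 1` (so `J₀` is the pair of lines `x = ±1`), then `a₂ = b₂ = 0`, `X₁₃² = 1`,
and exactly one of: (i) `F` is constant on `{x = −1}` and `F({x = 1})` is an
affine line; (ii) `F` is constant on `{x = 1}` and `F({x = −1})` is an affine line.
Hence the critical image is the union of a line and a point. -/
theorem stmt11 (a0 a1 a2 a3 a4 a5 b0 b1 b2 b3 b4 b5 : ℝ)
    (F : ℝ → ℝ → ℝ × ℝ)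
    (hF : F = fun x y =>
      (a0*x^2 + a1*x*y + a2*y^2 + a3*x + a4*y + a5,
       b0*x^2 + b1*x*y + b2*y^2 + b3*x + b4*y + b5))
    (hdet : ∀ x y : ℝ,
      (2*a0*x + a1*y + a3) * (b1*x + 2*b2*y + b4)
        - (a1*x + 2*a2*y + a4) * (2*b0*x + b1*y + b3) = x^2 - 1) :
    a2 = 0 ∧ b2 = 0 ∧ (a1*b3 - a3*b1)^2 = 1 ∧
    Xor'
      ((∀ y₁ y₂ : ℝ, F (-1) y₁ = F (-1) y₂) ∧
        ∃ p v : ℝ × ℝ, v ≠ 0 ∧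
          {q : ℝ × ℝ | ∃ y : ℝ, q = F 1 y} = {q : ℝ × ℝ | ∃ t : ℝ, q = p + t • v})
      ((∀ y₁ y₂ : ℝ, F 1 y₁ = F 1 y₂) ∧
        ∃ p v : ℝ × ℝ, v ≠ 0 ∧
          {q : ℝ × ℝ | ∃ y : ℝ, q = F (-1) y} = {q : ℝ × ℝ | ∃ t : ℝ, q = p + t • v}) := by
  have h00 := hdet 0 0
  have h10 := hdet 1 0
  have hm0 := hdet (-1) 0
  have h01 := hdet 0 1
  have h0m := hdet 0 (-1)
  have h11 := hdet 1 1
  have e1 : a0*b1 - a1*b0 = 1/2 := by linear_combination (h10 + hm0 - 2*h00)/4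
  have eX02 : a0*b2 - a2*b0 = 0 := by linear_combination (h11 - h10 - h01 + h00)/4
  have eX12 : a1*b2 - a2*b1 = 0 := by linear_combination (h01 + h0m - 2*h00)/4
  have ha2 : a2 = 0 := by
    linear_combination (-2*a2)*e1 - 2*a0*eX12 + 2*a1*eX02
  have hb2 : b2 = 0 := by
    linear_combination (-2*b2)*e1 + 2*b1*eX02 - 2*b0*eX12
  have e2 : 2*(a0*b4 - a4*b0) - (a1*b3 - a3*b1) = 0 := by
    linear_combination (h10 - hm0)/2
  have e3 : a1*b4 - a4*b1 = 0 := by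
    linear_combination (h01 - h0m)/2 - 2*a3*hb2 + 2*b3*ha2
  have e4 : a3*b4 - a4*b3 = -1 := by linear_combination h00
  have hs2 : (a1*b3 - a3*b1)^2 = 1 := by
    linear_combination (-(a1*b3-a3*b1))*e2 - 2*(a3*b4-a4*b3)*e1 + 2*(a0*b3-a3*b0)*e3 - e4
  have has : a4*(a1*b3 - a3*b1) = a1 := by linear_combination a3*e3 - a1*e4
  have hbs : b4*(a1*b3 - a3*b1) = b1 := by linear_combination b3*e3 - b1*e4
  subst ha2; subst hb2; subst hF
  refine ⟨rfl, rfl, hs2, ?_⟩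
  have hfac : (a1*b3 - a3*b1 - 1) * (a1*b3 - a3*b1 + 1) = 0 := by linear_combination hs2
  rcases mul_eq_zero.mp hfac with h | h
  · -- s = 1 : constant on x = -1, line on x = 1
    have hs : a1*b3 - a3*b1 = 1 := by linear_combination h
    have hc1 : a1*(-1) + a4 = 0 := by linear_combination has - a4*hs
    have hc2 : b1*(-1) + b4 = 0 := by linear_combination hbs - b4*hs
    have h3 : a1*1 + a4 ≠ 0 ∨ b1*1 + b4 ≠ 0 := by
      by_contra hc
      push_neg at hc
      obtain ⟨hA, hB⟩ := hc
      have ha1 : a1 = 0 := by linarith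
      have hb1 : b1 = 0 := by linarith
      have : (0:ℝ) = 1 := by linear_combination hs - b3*ha1 + a3*hb1
      norm_num at this
    obtain ⟨⟨hconst, hline⟩, hnot⟩ :=
      stmt11_aux a0 a1 a3 a4 a5 b0 b1 b3 b4 b5 (-1) 1 hc1 hc2 h3
    refine Or.inl ⟨⟨hconst, hline⟩, ?_⟩
    rintro ⟨hc, -⟩
    exact hnot hc
  · -- s = -1 : constant on x = 1, line on x = -1
    have hs : a1*b3 - a3*b1 = -1 := by linear_combination h
    have hc1 : a1*1 + a4 = 0 := by linear_combination a4*hs - has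
    have hc2 : b1*1 + b4 = 0 := by linear_combination b4*hs - hbs
    have h3 : a1*(-1) + a4 ≠ 0 ∨ b1*(-1) + b4 ≠ 0 := by
      by_contra hc
      push_neg at hc
      obtain ⟨hA, hB⟩ := hc
      have ha1 : a1 = 0 := by linarith
      have hb1 : b1 = 0 := by linarith
      have : (0:ℝ) = -1 := by linear_combination hs - b3*ha1 + a3*hb1
      norm_num at this
    obtain ⟨⟨hconst, hline⟩, hnot⟩ :=
      stmt11_aux a0 a1 a3 a4 a5 b0 b1 b3 b4 b5 1 (-1) hc1 hc2 h3
    refine Or.inr ⟨⟨hconst, hline⟩, ?_⟩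
    rintro ⟨hc, -⟩
    exact hnot hc
end

section
/- Let F be a quadratic map of the plane with coefficients aᵢ, bᵢ such that det DF(x,y) = x² for all (x,y) ∈ ℝ². Then a₂ = b₂ = a₄ = b₄ = 0, and consequently F is constant on the line {x = 0}; that is, the critical image J₁ is a single point. -/
/-- if a quadratic map `F` of the plane has Jacobian determinant `x²`
(so `J₀` is the line `x = 0` as a coincident pair of lines), then
`a₂ = b₂ = a₄ = b₄ = 0`, and `F` is constant on the line `x = 0`:
the critical image `J₁` is a single point. -/
theorem stmt12 (a0 a1 a2 a3 a4 a5 b0 b1 b2 b3 b4 b5 : ℝ)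
    (F : ℝ → ℝ → ℝ × ℝ)
    (hF : F = fun x y =>
      (a0*x^2 + a1*x*y + a2*y^2 + a3*x + a4*y + a5,
       b0*x^2 + b1*x*y + b2*y^2 + b3*x + b4*y + b5))
    (hdet : ∀ x y : ℝ,
      (2*a0*x + a1*y + a3) * (b1*x + 2*b2*y + b4)
        - (a1*x + 2*a2*y + a4) * (2*b0*x + b1*y + b3) = x^2) :
    a2 = 0 ∧ b2 = 0 ∧ a4 = 0 ∧ b4 = 0 ∧ ∀ y₁ y₂ : ℝ, F 0 y₁ = F 0 y₂ := by
  have h00 := hdet 0 0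
  have h10 := hdet 1 0
  have hm10 := hdet (-1) 0
  have h01 := hdet 0 1
  have h0m1 := hdet 0 (-1)
  have h11 := hdet 1 1
  -- coefficient equations
  have E1 : 2*a0*b1 - 2*a1*b0 = 1 := by linear_combination (h10 + hm10)/2 - h00
  have E4 : 2*a0*b4 + a3*b1 - a1*b3 - 2*a4*b0 = 0 := by linear_combination (h10 - hm10)/2
  have E3 : a1*b2 - a2*b1 = 0 := by linear_combination (h01 + h0m1)/2/2 - h00/2
  have E5 : a1*b4 + 2*a3*b2 - 2*a2*b3 - a4*b1 = 0 := by linear_combination (h01 - h0m1)/2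
  have E6 : a3*b4 - a4*b3 = 0 := by linear_combination h00
  have E2 : a0*b2 - a2*b0 = 0 := by
    linear_combination (h11 - (h10 + hm10)/2 - (h01 + h0m1)/2 + h00)/4 - E4/4 - E5/4
  have ha2 : a2 = 0 := by linear_combination 2*a1*E2 - 2*a0*E3 - a2*E1
  have hb2 : b2 = 0 := by linear_combination 2*b1*E2 - 2*b0*E3 - b2*E1
  have E5' : a1*b4 - a4*b1 = 0 := by linear_combination E5 - 2*a3*hb2 + 2*b3*ha2
  have hb4 : b4 = 0 := by
    have h : b4^2 = 0 := by
      linear_combination -b4^2*E1 + b1*b4*E4 + (b1*b3 - 2*b0*b4)*E5' - b1^2*E6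
    exact pow_eq_zero_iff two_ne_zero |>.mp h
  have ha4 : a4 = 0 := by
    have h : a4^2 = 0 := by
      linear_combination -a4^2*E1 + a1*a4*E4 + (a1*a3 - 2*a0*a4)*E5' - a1^2*E6
    exact pow_eq_zero_iff two_ne_zero |>.mp h
  refine ⟨ha2, hb2, ha4, hb4, fun y1 y2 => ?_⟩
  subst hF
  simp [ha2, hb2, ha4, hb4]
end

section
/- Let F be a quadratic map of the plane with coefficients aᵢ, bᵢ such that det DF(x,y) = x for all (x,y) ∈ ℝ². If X₂₄ := a₂b₄ − a₄b₂ = 0, then a₂ = 0 and b₂ = 0. -/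
/-- if a quadratic map `F` of the plane has Jacobian determinant `x`
and `X₂₄ = a₂b₄ − a₄b₂ = 0`, then `a₂ = 0` and `b₂ = 0`. -/
theorem stmt13 (a0 a1 a2 a3 a4 a5 b0 b1 b2 b3 b4 b5 : ℝ)
    (hdet : ∀ x y : ℝ,
      (2*a0*x + a1*y + a3) * (b1*x + 2*b2*y + b4)
        - (a1*x + 2*a2*y + a4) * (2*b0*x + b1*y + b3) = x)
    (hX24 : a2*b4 - a4*b2 = 0) :
    a2 = 0 ∧ b2 = 0 := by
  have e00 := hdet 0 0
  have e01 := hdet 0 1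
  have e0m := hdet 0 (-1)
  have e10 := hdet 1 0
  have em0 := hdet (-1) 0
  have e11 := hdet 1 1
  have E1 : a1*b2 - a2*b1 = 0 := by linear_combination (e01 + e0m)/4 - e00/2
  have E2 : a0*b2 - a2*b0 = 0 := by linear_combination (e11 - e10 - e01 + e00)/4
  have E4 : a1*b4 + 2*a3*b2 - 2*a2*b3 - a4*b1 = 0 := by
    linear_combination (e01 - e0m)/2
  have E5 : 2*a0*b4 + a3*b1 - a1*b3 - 2*a4*b0 = 1 := by
    linear_combination (e10 - em0)/2
  have ha2 : a2^2 = 0 := by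
    linear_combination (-a2^2)*E5 + (2*a0*a2 - a1^2/2)*hX24 + (2*a4*a2)*E2
      - (a2*a3 + a1*a4/2)*E1 + (a1*a2/2)*E4
  have hb2 : b2^2 = 0 := by
    linear_combination (-b2^2)*E5 + (2*b0*b2 - b1^2/2)*hX24 + (2*b2*b4)*E2
      - (b1*b4/2 + b2*b3)*E1 + (b1*b2/2)*E4
  exact ⟨sq_eq_zero_iff.mp ha2, sq_eq_zero_iff.mp hb2⟩
end

section
/- Let F be a quadratic map of the plane such that det DF(x,y) = x for all (x,y) ∈ ℝ². Then the image F({(0, t) : t ∈ ℝ}) of the critical line is exactly one of the following: a single point; an affine line {p + t·v : t ∈ ℝ} with v ≠ 0; or a nondegenerate parabola, i.e. L({(t, t²) : t ∈ ℝ}) for some bijective affine map L : ℝ² → ℝ². In particular it is never a ray. -/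
/-- A single point. -/
def IsPoint (S : Set (ℝ × ℝ)) : Prop := ∃ p : ℝ × ℝ, S = {p}

/-- An affine line `{p + t•v : t ∈ ℝ}` with `v ≠ 0`. -/
def IsLine (S : Set (ℝ × ℝ)) : Prop :=
  ∃ p v : ℝ × ℝ, v ≠ 0 ∧ S = {q : ℝ × ℝ | ∃ t : ℝ, q = p + t • v}

/-- A nondegenerate parabola: the image of the standard parabola `{(t, t²)}`
under a bijective affine map of the plane. -/
def IsParabola (S : Set (ℝ × ℝ)) : Prop :=
  ∃ L : (ℝ × ℝ) →ᵃ[ℝ] (ℝ × ℝ), Function.Bijective L ∧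
    S = L '' {q : ℝ × ℝ | ∃ t : ℝ, q = (t, t^2)}

lemma aux_point_not_line {S : Set (ℝ × ℝ)} (h1 : IsPoint S) (h2 : IsLine S) : False := by
  obtain ⟨p, rfl⟩ := h1
  obtain ⟨q, v, hv, hset⟩ := h2
  have h0 : q + (0:ℝ) • v ∈ ({p} : Set (ℝ × ℝ)) := by rw [hset]; exact ⟨0, rfl⟩
  have h1' : q + (1:ℝ) • v ∈ ({p} : Set (ℝ × ℝ)) := by rw [hset]; exact ⟨1, rfl⟩
  simp only [Set.mem_singleton_iff] at h0 h1'
  apply hv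
  have : q + (1:ℝ) • v = q + (0:ℝ) • v := by rw [h0, h1']
  simpa using this

lemma aux_point_not_parabola {S : Set (ℝ × ℝ)} (h1 : IsPoint S) (h2 : IsParabola S) : False := by
  obtain ⟨p, rfl⟩ := h1
  obtain ⟨L, hL, hset⟩ := h2
  have h0 : L (0, 0) ∈ ({p} : Set (ℝ × ℝ)) := by
    rw [hset]; exact ⟨(0, 0), ⟨0, by norm_num⟩, rfl⟩
  have h1' : L (1, 1) ∈ ({p} : Set (ℝ × ℝ)) := by
    rw [hset]; exact ⟨(1, 1), ⟨1, by norm_num⟩, rfl⟩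
  simp only [Set.mem_singleton_iff] at h0 h1'
  have := hL.injective (h0.trans h1'.symm)
  simp [Prod.ext_iff] at this

lemma aux_line_not_parabola {S : Set (ℝ × ℝ)} (h1 : IsLine S) (h2 : IsParabola S) : False := by
  obtain ⟨p, v, hv, hS1⟩ := h1
  obtain ⟨L, hL, hS2⟩ := h2
  have linj : Function.Injective L.linear := (L.linear_injective_iff).2 hL.injective
  have m0 : L ((0:ℝ), (0:ℝ)) ∈ S := by rw [hS2]; exact ⟨(0, 0), ⟨0, by norm_num⟩, rfl⟩
  have m1 : L ((1:ℝ), (1:ℝ)) ∈ S := by rw [hS2]; exact ⟨(1, 1), ⟨1, by norm_num⟩, rfl⟩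
  have m2 : L ((-1:ℝ), (1:ℝ)) ∈ S := by rw [hS2]; exact ⟨(-1, 1), ⟨-1, by norm_num⟩, rfl⟩
  rw [hS1] at m0 m1 m2
  obtain ⟨t0, ht0⟩ := m0
  obtain ⟨t1, ht1⟩ := m1
  obtain ⟨t2, ht2⟩ := m2
  have d1 : L.linear ((1:ℝ), (1:ℝ)) = (t1 - t0) • v := by
    have h := L.linearMap_vsub ((1:ℝ), (1:ℝ)) ((0:ℝ), (0:ℝ))
    simp only [vsub_eq_sub] at h
    rw [ht1, ht0] at h
    have e : ((1:ℝ), (1:ℝ)) - ((0:ℝ), (0:ℝ)) = ((1:ℝ), (1:ℝ)) := by norm_num [Prod.ext_iff]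
    rw [e] at h
    rw [h]
    module
  have d2 : L.linear ((-1:ℝ), (1:ℝ)) = (t2 - t0) • v := by
    have h := L.linearMap_vsub ((-1:ℝ), (1:ℝ)) ((0:ℝ), (0:ℝ))
    simp only [vsub_eq_sub] at h
    rw [ht2, ht0] at h
    have e : ((-1:ℝ), (1:ℝ)) - ((0:ℝ), (0:ℝ)) = ((-1:ℝ), (1:ℝ)) := by norm_num [Prod.ext_iff]
    rw [e] at h
    rw [h]
    module
  have key : L.linear ((t2 - t0) • ((1:ℝ), (1:ℝ)) - (t1 - t0) • ((-1:ℝ), (1:ℝ))) = 0 := by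
    rw [map_sub, map_smul, map_smul, d1, d2, smul_comm]
    abel
  have hz : (t2 - t0) • ((1:ℝ), (1:ℝ)) - (t1 - t0) • ((-1:ℝ), (1:ℝ)) = 0 := by
    apply linj
    rw [key, map_zero]
  have hc1 : (t2 - t0) + (t1 - t0) = 0 := by
    have := congrArg Prod.fst hz
    simp [Prod.smul_def] at this
    linarith
  have hc2 : (t2 - t0) - (t1 - t0) = 0 := by
    have := congrArg Prod.snd hz
    simp [Prod.smul_def] at this
    linarith
  have ht1' : t1 = t0 := by linarith
  have hzero : L.linear ((1:ℝ), (1:ℝ)) = 0 := by rw [d1, ht1']; simp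
  have : ((1:ℝ), (1:ℝ)) = (0 : ℝ × ℝ) := by
    apply linj; rw [hzero, map_zero]
  simp [Prod.ext_iff] at this

lemma aux_point_not_ray {S : Set (ℝ × ℝ)} (h1 : IsPoint S) (h2 : IsRay S) : False := by
  obtain ⟨p, rfl⟩ := h1
  obtain ⟨q, v, hv, hset⟩ := h2
  have h0 : q + (0:ℝ) • v ∈ ({p} : Set (ℝ × ℝ)) := by rw [hset]; exact ⟨0, le_refl _, rfl⟩
  have h1' : q + (1:ℝ) • v ∈ ({p} : Set (ℝ × ℝ)) := by rw [hset]; exact ⟨1, zero_le_one, rfl⟩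
  simp only [Set.mem_singleton_iff] at h0 h1'
  apply hv
  have : q + (1:ℝ) • v = q + (0:ℝ) • v := by rw [h0, h1']
  simpa using this

lemma aux_line_not_ray {S : Set (ℝ × ℝ)} (h1 : IsLine S) (h2 : IsRay S) : False := by
  obtain ⟨p, v, hv, hS1⟩ := h1
  obtain ⟨q, w, hw, hS2⟩ := h2
  have hq : q ∈ S := by rw [hS2]; exact ⟨0, le_refl _, by simp⟩
  have hqw : q + w ∈ S := by rw [hS2]; exact ⟨1, zero_le_one, by simp⟩
  rw [hS1] at hq hqw
  obtain ⟨t0, ht0⟩ := hq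
  obtain ⟨t1, ht1⟩ := hqw
  have hwv : w = (t1 - t0) • v := by
    have : q + w - q = (p + t1 • v) - (p + t0 • v) := by rw [← ht0, ← ht1]
    simp only [add_sub_cancel_left] at this
    rw [this]; module
  have hmem : q - w ∈ S := by
    rw [hS1]
    refine ⟨t0 - (t1 - t0), ?_⟩
    rw [ht0, hwv]; module
  rw [hS2] at hmem
  obtain ⟨s, hs, hsw⟩ := hmem
  have : (1 + s) • w = 0 := by
    have h' : q - w - q = q + s • w - q := by rw [← hsw]
    simp only [add_sub_cancel_left, sub_sub_cancel_left] at h'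
    have : -w = s • w := by simpa using h'
    rw [add_smul, one_smul, ← this]; abel
  rcases smul_eq_zero.1 this with h | h
  · linarith
  · exact hw h

lemma aux_parabola_not_ray {S : Set (ℝ × ℝ)} (h1 : IsParabola S) (h2 : IsRay S) : False := by
  obtain ⟨L, hL, hS1⟩ := h1
  obtain ⟨q, w, hw, hS2⟩ := h2
  have linj : Function.Injective L.linear := (L.linear_injective_iff).2 hL.injective
  have hq : q ∈ S := by rw [hS2]; exact ⟨0, le_refl _, by simp⟩
  rw [hS1] at hq
  obtain ⟨x, ⟨t0, hx⟩, hLx⟩ := hq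
  subst hx
  have m1 : L (t0 + 1, (t0 + 1)^2) ∈ S := by rw [hS1]; exact ⟨_, ⟨t0 + 1, rfl⟩, rfl⟩
  have m2 : L (t0 - 1, (t0 - 1)^2) ∈ S := by rw [hS1]; exact ⟨_, ⟨t0 - 1, rfl⟩, rfl⟩
  rw [hS2] at m1 m2
  obtain ⟨s1, hs1, he1⟩ := m1
  obtain ⟨s2, hs2, he2⟩ := m2
  have d1 : L.linear ((1:ℝ), 2*t0 + 1) = s1 • w := by
    have h := L.linearMap_vsub (t0 + 1, (t0 + 1)^2) (t0, t0^2)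
    simp only [vsub_eq_sub] at h
    rw [he1, hLx] at h
    have e : ((t0 + 1, (t0 + 1)^2) : ℝ × ℝ) - (t0, t0^2) = ((1:ℝ), 2*t0 + 1) := by
      simp [Prod.ext_iff]; ring
    rw [e] at h
    rw [h]; abel
  have d2 : L.linear ((-1:ℝ), -(2*t0) + 1) = s2 • w := by
    have h := L.linearMap_vsub (t0 - 1, (t0 - 1)^2) (t0, t0^2)
    simp only [vsub_eq_sub] at h
    rw [he2, hLx] at h
    have e : ((t0 - 1, (t0 - 1)^2) : ℝ × ℝ) - (t0, t0^2) = ((-1:ℝ), -(2*t0) + 1) := by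
      simp [Prod.ext_iff]; ring
    rw [e] at h
    rw [h]; abel
  have hs1' : s1 ≠ 0 := by
    intro h
    rw [h, zero_smul] at d1
    have : ((1:ℝ), 2*t0 + 1) = (0 : ℝ × ℝ) := by apply linj; rw [d1, map_zero]
    simp [Prod.ext_iff] at this
  have hs2' : s2 ≠ 0 := by
    intro h
    rw [h, zero_smul] at d2
    have : ((-1:ℝ), -(2*t0) + 1) = (0 : ℝ × ℝ) := by apply linj; rw [d2, map_zero]
    simp [Prod.ext_iff] at this
  have key : L.linear (s2 • ((1:ℝ), 2*t0 + 1) - s1 • ((-1:ℝ), -(2*t0) + 1)) = 0 := by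
    rw [map_sub, map_smul, map_smul, d1, d2, smul_comm]
    abel
  have hz : s2 • ((1:ℝ), 2*t0 + 1) - s1 • ((-1:ℝ), -(2*t0) + 1) = 0 := by
    apply linj; rw [key, map_zero]
  have : s2 + s1 = 0 := by
    have := congrArg Prod.fst hz
    simp [Prod.smul_def] at this
    linarith
  have h1pos : 0 < s1 := lt_of_le_of_ne hs1 (Ne.symm hs1')
  have h2pos : 0 < s2 := lt_of_le_of_ne hs2 (Ne.symm hs2')
  linarith

/-- The linear map `(x,y) ↦ (a*x + b*y, c*x + d*y)`. -/
noncomputable def linMap (a b c d : ℝ) : (ℝ × ℝ) →ₗ[ℝ] (ℝ × ℝ) where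
  toFun p := (a * p.1 + b * p.2, c * p.1 + d * p.2)
  map_add' p q := by simp [Prod.ext_iff]; constructor <;> ring
  map_smul' r p := by simp [Prod.ext_iff, Prod.smul_def]; constructor <;> ring

lemma linMap_injective {a b c d : ℝ} (hdet0 : a * d - b * c ≠ 0) :
    Function.Injective (linMap a b c d) := by
  rw [injective_iff_map_eq_zero]
  intro p hp
  simp only [linMap, LinearMap.coe_mk, AddHom.coe_mk, Prod.ext_iff, Prod.fst_zero,
    Prod.snd_zero] at hp
  obtain ⟨h1, h2⟩ := hp
  have hx : p.1 = 0 := by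
    have : (a * d - b * c) * p.1 = d * (a * p.1 + b * p.2) - b * (c * p.1 + d * p.2) := by ring
    rw [h1, h2] at this
    simp at this
    rcases this with h | h
    · exact absurd h hdet0
    · exact h
  have hy : p.2 = 0 := by
    have : (a * d - b * c) * p.2 = a * (c * p.1 + d * p.2) - c * (a * p.1 + b * p.2) := by ring
    rw [h1, h2] at this
    simp at this
    rcases this with h | h
    · exact absurd h hdet0
    · exact h
  exact Prod.ext hx hy

/-- The affine map `(x,y) ↦ (a*x + b*y + e, c*x + d*y + f)`. -/
noncomputable def affMap (a b c d e f : ℝ) : (ℝ × ℝ) →ᵃ[ℝ] (ℝ × ℝ) where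
  toFun p := linMap a b c d p + (e, f)
  linear := linMap a b c d
  map_vadd' p v := by
    simp only [vadd_eq_add, map_add]
    abel

/-- if a quadratic map `F` of the plane has Jacobian determinant `x`
(so `J₀` is the line `x = 0`), then the image `F({(0,t) : t ∈ ℝ})` of the critical
line is exactly one of: a single point, an affine line, or a nondegenerate parabola.
In particular it is never a ray. -/
theorem stmt14 (a0 a1 a2 a3 a4 a5 b0 b1 b2 b3 b4 b5 : ℝ)
    (hdet : ∀ x y : ℝ,
      (2*a0*x + a1*y + a3) * (b1*x + 2*b2*y + b4)
        - (a1*x + 2*a2*y + a4) * (2*b0*x + b1*y + b3) = x)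
    (S : Set (ℝ × ℝ))
    (hS : S = {q : ℝ × ℝ | ∃ t : ℝ, q = (a2*t^2 + a4*t + a5, b2*t^2 + b4*t + b5)}) :
    (IsPoint S ∨ IsLine S ∨ IsParabola S) ∧
    ¬(IsPoint S ∧ IsLine S) ∧ ¬(IsPoint S ∧ IsParabola S) ∧ ¬(IsLine S ∧ IsParabola S) ∧
    ¬ IsRay S := by
  -- coefficient identities
  have e1 : a1 * b2 - a2 * b1 = 0 := by
    linear_combination (hdet 0 1 + hdet 0 (-1) - 2 * hdet 0 0) / 4
  have e2 : a0 * b2 - a2 * b0 = 0 := by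
    linear_combination (hdet 1 1 - hdet 1 0 - hdet 0 1 + hdet 0 0) / 4
  have e4 : a1 * b4 + 2 * a3 * b2 - 2 * a2 * b3 - a4 * b1 = 0 := by
    linear_combination (hdet 0 1 - hdet 0 (-1)) / 2
  have e5 : 2 * a0 * b4 + a3 * b1 - a1 * b3 - 2 * a4 * b0 = 1 := by
    linear_combination (hdet 1 0 - hdet (-1) 0) / 2
  have main : IsPoint S ∨ IsLine S ∨ IsParabola S := by
    by_cases hD : a2 * b4 - a4 * b2 = 0
    · -- then a2 = b2 = 0
      have ha2 : a2 = 0 := by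
        have h : a2 ^ 2 = 0 := by
          linear_combination (-a2^2) * e5 + (2*a2*a0 - a1^2/2) * hD + (2*a2*a4) * e2
            + (a1*a2/2) * e4 - (a1*a4/2 + a2*a3) * e1
        exact pow_eq_zero_iff (two_ne_zero) |>.1 h
      have hb2 : b2 = 0 := by
        have h : b2 ^ 2 = 0 := by
          linear_combination (-b2^2) * e5 + (2*b2*b0 - b1^2/2) * hD + (2*b2*b4) * e2
            + (b1*b2/2) * e4 - (b1*b4/2 + b2*b3) * e1
        exact pow_eq_zero_iff (two_ne_zero) |>.1 h
      by_cases hv : (a4, b4) = ((0 : ℝ), (0 : ℝ))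
      · left
        refine ⟨(a5, b5), ?_⟩
        have ha4 : a4 = 0 := congrArg Prod.fst hv
        have hb4 : b4 = 0 := congrArg Prod.snd hv
        rw [hS]
        ext q
        simp only [Set.mem_setOf_eq, Set.mem_singleton_iff, ha2, hb2, ha4, hb4]
        constructor
        · rintro ⟨t, rfl⟩; simp
        · rintro rfl; exact ⟨0, by simp⟩
      · right; left
        refine ⟨(a5, b5), (a4, b4), hv, ?_⟩
        rw [hS]
        ext q
        simp only [Set.mem_setOf_eq]
        constructor
        · rintro ⟨t, rfl⟩
          exact ⟨t, by simp [Prod.ext_iff, ha2, hb2, Prod.smul_def]; constructor <;> ring⟩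
        · rintro ⟨t, rfl⟩
          exact ⟨t, by simp [Prod.ext_iff, ha2, hb2, Prod.smul_def]; constructor <;> ring⟩
    · -- parabola
      right; right
      refine ⟨affMap a4 a2 b4 b2 a5 b5, ?_, ?_⟩
      · have hinj : Function.Injective (linMap a4 a2 b4 b2) := by
          apply linMap_injective
          intro h
          apply hD
          linarith [h]
        have hsurj : Function.Surjective (linMap a4 a2 b4 b2) :=
          (LinearMap.injective_iff_surjective).1 hinj
        constructor
        · intro p q hpq
          simp only [affMap, AffineMap.coe_mk, add_left_inj] at hpq
          exact hinj hpq
        · intro y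
          obtain ⟨p, hp⟩ := hsurj (y - (a5, b5))
          exact ⟨p, by simp only [affMap, AffineMap.coe_mk, hp]; abel⟩
      · rw [hS]
        ext q
        simp only [Set.mem_setOf_eq, Set.mem_image]
        constructor
        · rintro ⟨t, rfl⟩
          refine ⟨(t, t^2), ⟨t, rfl⟩, ?_⟩
          simp only [affMap, AffineMap.coe_mk, linMap, LinearMap.coe_mk, AddHom.coe_mk,
            Prod.mk_add_mk, Prod.mk.injEq]
          constructor <;> ring
        · rintro ⟨x, ⟨t, rfl⟩, rfl⟩
          refine ⟨t, ?_⟩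
          simp only [affMap, AffineMap.coe_mk, linMap, LinearMap.coe_mk, AddHom.coe_mk,
            Prod.mk_add_mk, Prod.mk.injEq]
          constructor <;> ring
  refine ⟨main, fun ⟨h1, h2⟩ => aux_point_not_line h1 h2,
    fun ⟨h1, h2⟩ => aux_point_not_parabola h1 h2,
    fun ⟨h1, h2⟩ => aux_line_not_parabola h1 h2, ?_⟩
  intro hray
  rcases main with h | h | h
  · exact aux_point_not_ray h hray
  · exact aux_line_not_ray h hray
  · exact aux_parabola_not_ray h hray
end

section
/- Let F be a quadratic map of the plane whose quadratic coefficients (a₀, a₁, a₂, b₀, b₁, b₂) are not all zero, and suppose det DF(x,y) = 0 for all (x,y) ∈ ℝ². Then there exists a bijective affine map L : ℝ² → ℝ² such that L(F(ℝ²)) is exactly one of the following three model sets: the line ℝ × {0}; the ray [0, ∞) × {0}; or the parabola {(t, t²) : t ∈ ℝ}. -/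
/-!
Since `det DF` vanishes identically, its quadratic part does too, which forces the quadratic
parts of the two components of `F` to be proportional. A rotation-dilation `(l, μ)` then turns `F`
into `(q, d)` with `q` quadratic and `d` affine, still with vanishing Jacobian, i.e. `∇q` is
everywhere parallel to `∇d`. If `d` is constant, the range is `range q × {c}`, and completing the
square shows that a quadratic in two variables with nonzero quadratic part takes as values all of
`ℝ` or a closed half-line: a line or a ray. Otherwise `q = e u² + f u + c` with `u = d - d(0)` and
`e ≠ 0`, so the range is a parabola.
-/

open Set

def quadPoly (A B C D E G : ℝ) (p : ℝ × ℝ) : ℝ :=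
  A * p.1 ^ 2 + B * p.1 * p.2 + C * p.2 ^ 2 + D * p.1 + E * p.2 + G

def IsUnivOrRay (S : Set ℝ) : Prop :=
  S = univ ∨ ∃ m, S = Ici m ∨ S = Iic m

lemma IsUnivOrRay.neg {S : Set ℝ} (h : IsUnivOrRay S) : IsUnivOrRay (-S) := by
  rcases h with rfl | ⟨m, rfl | rfl⟩
  · exact Or.inl neg_univ
  · exact Or.inr ⟨-m, Or.inr (neg_Ici m)⟩
  · exact Or.inr ⟨-m, Or.inl (neg_Iic m)⟩

lemma iUnion_Ici_eq_univ {ι α : Type*} [LinearOrder α] {f : ι → α}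
    (hf : ¬BddBelow (range f)) : ⋃ i, Ici (f i) = univ := by
  refine eq_univ_of_forall fun x => ?_
  obtain ⟨_, ⟨i, rfl⟩, hi⟩ := not_bddBelow_iff.mp hf x
  exact mem_iUnion.mpr ⟨i, hi.le⟩

lemma iUnion_Ici_eq_Ici {ι α : Type*} [Preorder α] {f : ι → α} {m : α}
    (hf : IsLeast (range f) m) : ⋃ i, Ici (f i) = Ici m := by
  obtain ⟨⟨i, hi⟩, hm⟩ := hf
  refine Subset.antisymm (iUnion_subset fun j => Ici_subset_Ici.mpr (hm ⟨j, rfl⟩)) ?_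
  exact hi ▸ subset_iUnion (fun j => Ici (f j)) i

lemma range_quadratic_of_pos {a : ℝ} (ha : 0 < a) (b c : ℝ) :
    range (fun t => a * t ^ 2 + b * t + c) = Ici (c - b ^ 2 / (4 * a)) := by
  ext r
  constructor
  · rintro ⟨t, rfl⟩
    have : a * t ^ 2 + b * t + c - (c - b ^ 2 / (4 * a)) = (2 * a * t + b) ^ 2 / (4 * a) := by
      field_simp; ring
    rw [mem_Ici, ← sub_nonneg, this]
    positivity
  · intro hr
    have hs := Real.sq_sqrt (div_nonneg (sub_nonneg.mpr hr) ha.le)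
    refine ⟨√((r - (c - b ^ 2 / (4 * a))) / a) - b / (2 * a), ?_⟩
    field_simp at hs ⊢
    linear_combination hs

lemma exists_isLeast_or_not_bddBelow_range_quadratic (a b c : ℝ) :
    (∃ m, IsLeast (range fun t => a * t ^ 2 + b * t + c) m) ∨
      ¬BddBelow (range fun t => a * t ^ 2 + b * t + c) := by
  rcases lt_trichotomy a 0 with ha | rfl | ha
  · right
    have hneg :
        (fun t => a * t ^ 2 + b * t + c) = Neg.neg ∘ fun t => -a * t ^ 2 + -b * t + -c := by
      funext t; simp only [Function.comp_apply]; ring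
    rw [hneg, range_comp, range_quadratic_of_pos (neg_pos.mpr ha), image_neg_Ici]
    exact not_bddBelow_Iic _
  · by_cases hb : b = 0
    · subst hb
      left
      exact ⟨c, by simp⟩
    · right
      have hsurj : range (fun t => 0 * t ^ 2 + b * t + c) = univ :=
        eq_univ_of_forall fun r => ⟨(r - c) / b, by field_simp; ring⟩
      rw [hsurj]
      exact not_bddBelow_univ
  · left
    rw [range_quadratic_of_pos ha]
    exact ⟨_, isLeast_Ici⟩

lemma range_quadPoly_of_pos {A : ℝ} (hA : 0 < A) (B C D E G : ℝ) :
    IsUnivOrRay (range (quadPoly A B C D E G)) := by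
  -- completing the square in `x`, for fixed `y` the values of `quadPoly` fill `[ρ y, ∞)`
  set ρ : ℝ → ℝ := fun y =>
    (C - B ^ 2 / (4 * A)) * y ^ 2 + (E - B * D / (2 * A)) * y + (G - D ^ 2 / (4 * A)) with hρ
  have hx : ∀ y, range (fun x => quadPoly A B C D E G (x, y)) = Ici (ρ y) := fun y => by
    convert range_quadratic_of_pos hA (B * y + D) (C * y ^ 2 + E * y + G) using 2
    · funext x; simp only [quadPoly]; ring
    · simp only [hρ]; field_simp; ring
  have hslice : range (quadPoly A B C D E G) = ⋃ y, Ici (ρ y) := by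
    simp_rw [← hx]
    ext r
    simp only [mem_range, mem_iUnion, Prod.exists]
    exact exists_comm
  rw [hslice]
  rcases exists_isLeast_or_not_bddBelow_range_quadratic (C - B ^ 2 / (4 * A))
    (E - B * D / (2 * A)) (G - D ^ 2 / (4 * A)) with ⟨m, hm⟩ | hunb
  · exact Or.inr ⟨m, Or.inl (iUnion_Ici_eq_Ici hm)⟩
  · exact Or.inl (iUnion_Ici_eq_univ hunb)

lemma range_quadPoly_of_ne_zero {A : ℝ} (hA : A ≠ 0) (B C D E G : ℝ) :
    IsUnivOrRay (range (quadPoly A B C D E G)) := by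
  rcases hA.lt_or_gt with hA | hA
  · have hneg : quadPoly A B C D E G = Neg.neg ∘ quadPoly (-A) (-B) (-C) (-D) (-E) (-G) := by
      funext p; simp only [quadPoly, Function.comp_apply]; ring
    rw [hneg, range_comp, image_neg_eq_neg]
    exact (range_quadPoly_of_pos (neg_pos.mpr hA) _ _ _ _ _).neg
  · exact range_quadPoly_of_pos hA B C D E G

lemma quadPoly_comp_swap (A B C D E G : ℝ) :
    quadPoly A B C D E G ∘ Prod.swap = quadPoly C B A E D G := by
  funext p; simp only [quadPoly, Function.comp_apply, Prod.fst_swap, Prod.snd_swap]; ring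

lemma quadPoly_comp_shear (A B C D E G : ℝ) :
    quadPoly A B C D E G ∘ (fun p => (p.1, p.1 + p.2)) =
      quadPoly (A + B + C) (B + 2 * C) C (D + E) E G := by
  funext p; simp only [quadPoly, Function.comp_apply]; ring

lemma range_quadPoly {A B C : ℝ} (h : ¬(A = 0 ∧ B = 0 ∧ C = 0)) (D E G : ℝ) :
    IsUnivOrRay (range (quadPoly A B C D E G)) := by
  by_cases hA : A = 0
  · by_cases hC : C = 0
    · have hshear : Function.Surjective fun p : ℝ × ℝ => (p.1, p.1 + p.2) :=
        fun q => ⟨(q.1, q.2 - q.1), by simp⟩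
      rw [← hshear.range_comp, quadPoly_comp_shear]
      exact range_quadPoly_of_ne_zero (by simpa [hA, hC] using h) _ _ _ _ _
    · rw [← Prod.swap_surjective.range_comp, quadPoly_comp_swap]
      exact range_quadPoly_of_ne_zero hC _ _ _ _ _
  · exact range_quadPoly_of_ne_zero hA _ _ _ _ _

def planeAffine (p q r s t u : ℝ) : (ℝ × ℝ) →ᵃ[ℝ] ℝ × ℝ :=
  ((p • LinearMap.fst ℝ ℝ ℝ + q • LinearMap.snd ℝ ℝ ℝ).prod
    (r • LinearMap.fst ℝ ℝ ℝ + s • LinearMap.snd ℝ ℝ ℝ)).toAffineMap + AffineMap.const ℝ _ (t, u)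

lemma planeAffine_apply (p q r s t u : ℝ) (v : ℝ × ℝ) :
    planeAffine p q r s t u v = (p * v.1 + q * v.2 + t, r * v.1 + s * v.2 + u) := rfl

lemma bijective_planeAffine {p q r s : ℝ} (h : p * s - q * r ≠ 0) (t u : ℝ) :
    Function.Bijective (planeAffine p q r s t u) := by
  obtain ⟨k, hk, hk0⟩ : ∃ k, p * s - q * r = k ∧ k ≠ 0 := ⟨_, rfl, h⟩
  rw [Function.bijective_iff_has_inverse]
  refine ⟨fun v => ((s * (v.1 - t) - q * (v.2 - u)) / k,
    (p * (v.2 - u) - r * (v.1 - t)) / k), fun v => ?_, fun v => ?_⟩ <;>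
  · simp only [planeAffine_apply, Prod.ext_iff]
    constructor <;> (field_simp; subst hk; ring)

def IsAffineLineRayOrParabola (S : Set (ℝ × ℝ)) : Prop :=
  ∃ L : (ℝ × ℝ) →ᵃ[ℝ] (ℝ × ℝ), Function.Bijective L ∧
    (L '' S = {q : ℝ × ℝ | q.2 = 0} ∨
     L '' S = {q : ℝ × ℝ | 0 ≤ q.1 ∧ q.2 = 0} ∨
     L '' S = {q : ℝ × ℝ | ∃ t : ℝ, q = (t, t ^ 2)})

lemma IsAffineLineRayOrParabola.of_image {S : Set (ℝ × ℝ)} {L : (ℝ × ℝ) →ᵃ[ℝ] (ℝ × ℝ)}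
    (hL : Function.Bijective L) (h : IsAffineLineRayOrParabola (L '' S)) :
    IsAffineLineRayOrParabola S := by
  obtain ⟨L', hL', hS⟩ := h
  refine ⟨L'.comp L, ?_, ?_⟩
  · rw [AffineMap.coe_comp]
    exact hL'.comp hL
  · rwa [AffineMap.coe_comp, image_comp]

lemma isAffineLineRayOrParabola_prod_singleton {I : Set ℝ} (hI : IsUnivOrRay I) (c : ℝ) :
    IsAffineLineRayOrParabola (I ×ˢ {c}) := by
  rcases hI with rfl | ⟨m, rfl | rfl⟩
  · refine ⟨planeAffine 1 0 0 1 0 (-c), bijective_planeAffine (by norm_num) _ _, Or.inl ?_⟩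
    ext ⟨x, y⟩
    simp [planeAffine_apply, ← sub_eq_add_neg, eq_comm (b := y)]
  · refine ⟨planeAffine 1 0 0 1 (-m) (-c), bijective_planeAffine (by norm_num) _ _,
      Or.inr (Or.inl ?_)⟩
    ext ⟨x, y⟩
    simp [planeAffine_apply, ← sub_eq_add_neg, sub_eq_iff_eq_add, eq_comm (b := y)]
  · refine ⟨planeAffine (-1) 0 0 1 m (-c), bijective_planeAffine (by norm_num) _ _,
      Or.inr (Or.inl ?_)⟩
    ext ⟨x, y⟩
    simp [planeAffine_apply, ← sub_eq_add_neg, eq_comm (b := y), neg_add_eq_iff_eq_add,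
      ← sub_eq_iff_eq_add]

lemma isAffineLineRayOrParabola_range_parabola {e : ℝ} (he : e ≠ 0) (f c d : ℝ) :
    IsAffineLineRayOrParabola (range fun t => (e * t ^ 2 + f * t + c, t + d)) := by
  refine ⟨planeAffine 0 1 (1 / e) (-f / e) (-d) ((f * d - c) / e),
    bijective_planeAffine (by simpa using he) _ _, Or.inr (Or.inr ?_)⟩
  have hcomp : planeAffine 0 1 (1 / e) (-f / e) (-d) ((f * d - c) / e) ∘
      (fun t => (e * t ^ 2 + f * t + c, t + d)) = fun t => (t, t ^ 2) := by
    funext t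
    simp only [Function.comp_apply, planeAffine_apply, Prod.mk.injEq]
    constructor
    · ring
    · field_simp; ring
  rw [← range_comp, hcomp]
  ext q
  simp [eq_comm]

lemma exists_quadPoly_eq_quadratic_comp_of_jacobian {A B C D E d1 d2 : ℝ}
    (hABC : ¬(A = 0 ∧ B = 0 ∧ C = 0)) (hd : d1 ≠ 0 ∨ d2 ≠ 0)
    (hjac : ∀ x y : ℝ, (2 * A * x + B * y + D) * d2 - (B * x + 2 * C * y + E) * d1 = 0)
    (G : ℝ) :
    ∃ e f : ℝ, e ≠ 0 ∧ ∀ p : ℝ × ℝ, quadPoly A B C D E G p =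
      e * (d1 * p.1 + d2 * p.2) ^ 2 + f * (d1 * p.1 + d2 * p.2) + G := by
  have h2A : 2 * A * d2 = B * d1 := by linear_combination hjac 1 0 - hjac 0 0
  have hBd : B * d2 = 2 * C * d1 := by linear_combination hjac 0 1 - hjac 0 0
  have hDE : D * d2 = E * d1 := by linear_combination hjac 0 0
  obtain ⟨e, f, rfl, rfl, rfl, rfl, rfl⟩ : ∃ e f : ℝ,
      A = e * d1 ^ 2 ∧ B = 2 * e * d1 * d2 ∧ C = e * d2 ^ 2 ∧ D = f * d1 ∧ E = f * d2 := by
    rcases hd with h1 | h2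
    · refine ⟨A / d1 ^ 2, D / d1, by field_simp, ?_, ?_, by field_simp, ?_⟩
      · field_simp; linear_combination (-1) * h2A
      · field_simp; linear_combination (-d2 / 2) * h2A + (-d1 / 2) * hBd
      · field_simp; linear_combination (-1) * hDE
    · refine ⟨C / d2 ^ 2, E / d2, ?_, ?_, by field_simp, ?_, by field_simp⟩
      · field_simp; linear_combination (d2 / 2) * h2A + (d1 / 2) * hBd
      · field_simp; linear_combination hBd
      · field_simp; linear_combination hDE
  refine ⟨e, f, fun he => hABC ⟨by simp [he], by simp [he], by simp [he]⟩, fun p => ?_⟩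
  simp only [quadPoly]
  ring

lemma surjective_linear_form {d1 d2 : ℝ} (hd : d1 ≠ 0 ∨ d2 ≠ 0) :
    Function.Surjective fun p : ℝ × ℝ => d1 * p.1 + d2 * p.2 := by
  rcases hd with h | h
  · exact fun t => ⟨(t / d1, 0), by field_simp; ring⟩
  · exact fun t => ⟨(0, t / d2), by field_simp; ring⟩

lemma isAffineLineRayOrParabola_of_jacobian {A B C D E d1 d2 : ℝ}
    (hABC : ¬(A = 0 ∧ B = 0 ∧ C = 0))
    (hjac : ∀ x y : ℝ, (2 * A * x + B * y + D) * d2 - (B * x + 2 * C * y + E) * d1 = 0)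
    (G d5 : ℝ) :
    IsAffineLineRayOrParabola
      (range fun p : ℝ × ℝ => (quadPoly A B C D E G p, d1 * p.1 + d2 * p.2 + d5)) := by
  by_cases hd : d1 = 0 ∧ d2 = 0
  · obtain ⟨rfl, rfl⟩ := hd
    have hprod : (range fun p : ℝ × ℝ => (quadPoly A B C D E G p, 0 * p.1 + 0 * p.2 + d5)) =
        range (quadPoly A B C D E G) ×ˢ {d5} := by
      ext ⟨x, y⟩
      simp [eq_comm (a := d5)]
    rw [hprod]
    exact isAffineLineRayOrParabola_prod_singleton (range_quadPoly hABC D E G) d5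
  · obtain ⟨e, f, he, hq⟩ :=
      exists_quadPoly_eq_quadratic_comp_of_jacobian hABC (not_and_or.mp hd) hjac G
    have hcomp : (fun p : ℝ × ℝ => (quadPoly A B C D E G p, d1 * p.1 + d2 * p.2 + d5)) =
        (fun t => (e * t ^ 2 + f * t + G, t + d5)) ∘
          fun p : ℝ × ℝ => d1 * p.1 + d2 * p.2 := by
      funext p
      simp only [Function.comp_apply, hq]
    rw [hcomp, (surjective_linear_form (not_and_or.mp hd)).range_comp]
    exact isAffineLineRayOrParabola_range_parabola he f G d5

lemma quadratic_minors_eq_of_jacobian {a0 a1 a2 a3 a4 b0 b1 b2 b3 b4 : ℝ}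
    (hdet : ∀ x y : ℝ, (2 * a0 * x + a1 * y + a3) * (b1 * x + 2 * b2 * y + b4)
      - (a1 * x + 2 * a2 * y + a4) * (2 * b0 * x + b1 * y + b3) = 0) :
    a0 * b1 = a1 * b0 ∧ a0 * b2 = a2 * b0 ∧ a1 * b2 = a2 * b1 :=
  ⟨by linear_combination (hdet 1 0 + hdet (-1) 0 - 2 * hdet 0 0) / 4,
    by linear_combination (hdet 1 1 + hdet (-1) (-1) - hdet 1 (-1) - hdet (-1) 1) / 16,
    by linear_combination (hdet 0 1 + hdet 0 (-1) - 2 * hdet 0 0) / 4⟩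

lemma exists_dependence_of_minors {a0 a1 a2 b0 b1 b2 : ℝ}
    (m01 : a0 * b1 = a1 * b0) (m02 : a0 * b2 = a2 * b0) (m12 : a1 * b2 = a2 * b1) :
    ∃ l μ : ℝ, l ^ 2 + μ ^ 2 ≠ 0 ∧ l * b0 = μ * a0 ∧ l * b1 = μ * a1 ∧ l * b2 = μ * a2 := by
  by_cases ha0 : a0 = 0
  · by_cases ha1 : a1 = 0
    · by_cases ha2 : a2 = 0
      · exact ⟨0, 1, by norm_num, by simp [ha0], by simp [ha1], by simp [ha2]⟩
      · exact ⟨a2, b2, by positivity, by linear_combination -m02, by linear_combination -m12,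
          by ring⟩
    · exact ⟨a1, b1, by positivity, by linear_combination -m01, by ring,
        by linear_combination m12⟩
  · exact ⟨a0, b0, by positivity, by ring, by linear_combination m01,
      by linear_combination m02⟩

lemma eq_zero_of_rotate_eq_zero {l μ a b : ℝ} (hlμ : l ^ 2 + μ ^ 2 ≠ 0)
    (h1 : l * a + μ * b = 0) (h2 : l * b = μ * a) : a = 0 ∧ b = 0 := by
  have ha : (l ^ 2 + μ ^ 2) * a = 0 := by linear_combination l * h1 - μ * h2
  have hb : (l ^ 2 + μ ^ 2) * b = 0 := by linear_combination μ * h1 + l * h2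
  exact ⟨(mul_eq_zero.mp ha).resolve_left hlμ, (mul_eq_zero.mp hb).resolve_left hlμ⟩

lemma image_rotate_range_quadPoly {l μ a0 a1 a2 a3 a4 a5 b0 b1 b2 b3 b4 b5 : ℝ}
    (h0 : l * b0 = μ * a0) (h1 : l * b1 = μ * a1) (h2 : l * b2 = μ * a2) :
    planeAffine l μ (-μ) l 0 0 ''
        range (fun p => (quadPoly a0 a1 a2 a3 a4 a5 p, quadPoly b0 b1 b2 b3 b4 b5 p)) =
      range fun p : ℝ × ℝ =>
        (quadPoly (l * a0 + μ * b0) (l * a1 + μ * b1) (l * a2 + μ * b2) (l * a3 + μ * b3)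
          (l * a4 + μ * b4) (l * a5 + μ * b5) p,
         (l * b3 - μ * a3) * p.1 + (l * b4 - μ * a4) * p.2 + (l * b5 - μ * a5)) := by
  rw [← range_comp]
  congr 1
  funext p
  simp only [Function.comp_apply, planeAffine_apply, quadPoly, Prod.mk.injEq]
  constructor
  · ring
  · linear_combination p.1 ^ 2 * h0 + p.1 * p.2 * h1 + p.2 ^ 2 * h2

/-- if a quadratic map `F` of the plane (with not all quadratic
coefficients zero) has identically vanishing Jacobian determinant (so `J₀ = ℝ²`),
then there is a bijective affine map `L` of the plane taking the range `F(ℝ²)`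
exactly onto one of the three model sets: the line `ℝ × {0}`, the ray
`[0,∞) × {0}`, or the parabola `{(t, t²) : t ∈ ℝ}`. -/
theorem stmt15 (a0 a1 a2 a3 a4 a5 b0 b1 b2 b3 b4 b5 : ℝ)
    (hquad : ¬(a0 = 0 ∧ a1 = 0 ∧ a2 = 0 ∧ b0 = 0 ∧ b1 = 0 ∧ b2 = 0))
    (F : ℝ × ℝ → ℝ × ℝ)
    (hF : F = fun p =>
      (a0*p.1^2 + a1*p.1*p.2 + a2*p.2^2 + a3*p.1 + a4*p.2 + a5,
       b0*p.1^2 + b1*p.1*p.2 + b2*p.2^2 + b3*p.1 + b4*p.2 + b5))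
    (hdet : ∀ x y : ℝ,
      (2*a0*x + a1*y + a3) * (b1*x + 2*b2*y + b4)
        - (a1*x + 2*a2*y + a4) * (2*b0*x + b1*y + b3) = 0) :
    ∃ L : (ℝ × ℝ) →ᵃ[ℝ] (ℝ × ℝ), Function.Bijective L ∧
      (L '' Set.range F = {q : ℝ × ℝ | q.2 = 0} ∨
       L '' Set.range F = {q : ℝ × ℝ | 0 ≤ q.1 ∧ q.2 = 0} ∨
       L '' Set.range F = {q : ℝ × ℝ | ∃ t : ℝ, q = (t, t^2)}) := by
  obtain ⟨m01, m02, m12⟩ := quadratic_minors_eq_of_jacobian hdet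
  obtain ⟨l, μ, hlμ, h0, h1, h2⟩ := exists_dependence_of_minors m01 m02 m12
  have hquad_rot : ¬(l * a0 + μ * b0 = 0 ∧ l * a1 + μ * b1 = 0 ∧ l * a2 + μ * b2 = 0) := by
    rintro ⟨hA, hB, hC⟩
    obtain ⟨ha0, hb0⟩ := eq_zero_of_rotate_eq_zero hlμ hA h0
    obtain ⟨ha1, hb1⟩ := eq_zero_of_rotate_eq_zero hlμ hB h1
    obtain ⟨ha2, hb2⟩ := eq_zero_of_rotate_eq_zero hlμ hC h2
    exact hquad ⟨ha0, ha1, ha2, hb0, hb1, hb2⟩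
  have hjac : ∀ x y : ℝ,
      (2 * (l * a0 + μ * b0) * x + (l * a1 + μ * b1) * y + (l * a3 + μ * b3))
          * (l * b4 - μ * a4)
        - ((l * a1 + μ * b1) * x + 2 * (l * a2 + μ * b2) * y + (l * a4 + μ * b4))
          * (l * b3 - μ * a3) = 0 := fun x y => by
    -- the Jacobian determinant of the rotated map is `(l ^ 2 + μ ^ 2) * det DF`
    linear_combination (l ^ 2 + μ ^ 2) * hdet x y
      - (l * (2 * a0 * x + a1 * y + a3) + μ * (2 * b0 * x + b1 * y + b3))
        * (x * h1 + 2 * y * h2)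
      + (l * (a1 * x + 2 * a2 * y + a4) + μ * (b1 * x + 2 * b2 * y + b4))
        * (2 * x * h0 + y * h1)
  have hrot : Function.Bijective (planeAffine l μ (-μ) l 0 0) :=
    bijective_planeAffine (by convert hlμ using 1; ring) 0 0
  refine IsAffineLineRayOrParabola.of_image hrot ?_
  have hF' : F = fun p => (quadPoly a0 a1 a2 a3 a4 a5 p, quadPoly b0 b1 b2 b3 b4 b5 p) := hF
  rw [hF', image_rotate_range_quadPoly h0 h1 h2]
  exact isAffineLineRayOrParabola_of_jacobian hquad_rot hjac _ _
end

section
/- There is no quadratic map of the plane F (no choice of real coefficients a₀,…,a₅, b₀,…,b₅) such that det DF(x,y) = x² + y² + 1 for all (x,y) ∈ ℝ². -/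
/-- no quadratic map of the plane has Jacobian determinant
`x² + y² + 1`. -/
theorem stmt16 :
    ¬ ∃ a0 a1 a2 a3 a4 a5 b0 b1 b2 b3 b4 b5 : ℝ,
      ∀ x y : ℝ,
        (2*a0*x + a1*y + a3) * (b1*x + 2*b2*y + b4)
          - (a1*x + 2*a2*y + a4) * (2*b0*x + b1*y + b3) = x^2 + y^2 + 1 := by
  rintro ⟨a0, a1, a2, a3, a4, a5, b0, b1, b2, b3, b4, b5, h⟩
  -- coefficient equations extracted from evaluations
  have E00 : a3*b4 - a4*b3 = 1 := by linear_combination h 0 0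
  have E20 : 2*a0*b1 - 2*a1*b0 = 1 := by
    linear_combination (h 1 0 + h (-1) 0 - 2 * h 0 0) / 2
  have E02 : 2*a1*b2 - 2*a2*b1 = 1 := by
    linear_combination (h 0 1 + h 0 (-1) - 2 * h 0 0) / 2
  have E11 : 4*a0*b2 - 4*a2*b0 = 0 := by
    linear_combination h 1 1 - h 1 0 - h 0 1 + h 0 0
  have E10 : 2*a0*b4 + a3*b1 - a1*b3 - 2*a4*b0 = 0 := by
    linear_combination (h 1 0 - h (-1) 0) / 2
  have E01 : a1*b4 + 2*a3*b2 - 2*a2*b3 - a4*b1 = 0 := by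
    linear_combination (h 0 1 - h 0 (-1)) / 2
  -- the matrix P = adj(A) * C is traceless, has determinant 1, and is symmetric
  have h1 : 2*a0*b4 - 2*a4*b0 = -(a3*b1 - a1*b3) := by linarith
  have h2 : a4*b1 - a1*b4 = 2*a0*b3 - 2*a3*b0 := by
    linear_combination (2*a0*b3 - 2*a3*b0) * E02 - (a4*b1 - a1*b4) * E20
      + (a3*b1 - a1*b3) * E11 - (2*a0*b1 - 2*a1*b0) * E01
  have h3 : (a3*b1 - a1*b3) * (2*a0*b4 - 2*a4*b0)
      - (a4*b1 - a1*b4) * (2*a0*b3 - 2*a3*b0) = 1 := by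
    linear_combination (a3*b4 - a4*b3) * E20 + E00
  have h4 : (a3*b1 - a1*b3)^2 + (a4*b1 - a1*b4)^2 = -1 := by
    linear_combination (a3*b1 - a1*b3) * h1 + (a4*b1 - a1*b4) * h2 - h3
  nlinarith [sq_nonneg (a3*b1 - a1*b3), sq_nonneg (a4*b1 - a1*b4), h4]
end

section
/- There is no quadratic map of the plane F (no choice of real coefficients a₀,…,a₅, b₀,…,b₅) such that det DF(x,y) = x² + 1 for all (x,y) ∈ ℝ². -/
/-- no quadratic map of the plane has Jacobian determinant `x² + 1`. -/
theorem stmt17 :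
    ¬ ∃ a0 a1 a2 a3 a4 a5 b0 b1 b2 b3 b4 b5 : ℝ,
      ∀ x y : ℝ,
        (2*a0*x + a1*y + a3) * (b1*x + 2*b2*y + b4)
          - (a1*x + 2*a2*y + a4) * (2*b0*x + b1*y + b3) = x^2 + 1 := by
  rintro ⟨a0, a1, a2, a3, a4, a5, b0, b1, b2, b3, b4, b5, h⟩
  -- extract coefficient equations
  have e6 : a3*b4 - a4*b3 = 1 := by linear_combination h 0 0
  have exx : 2*(a0*b1) - 2*(a1*b0) = 1 := by
    linear_combination (h 1 0 + h (-1) 0) / 2 - h 0 0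
  have ex : 2*a0*b4 + a3*b1 - a1*b3 - 2*a4*b0 = 0 := by
    linear_combination (h 1 0 - h (-1) 0) / 2
  have eyy : 2*(a1*b2) - 2*(a2*b1) = 0 := by
    linear_combination (h 0 1 + h 0 (-1)) / 2 - h 0 0
  have ey : a1*b4 + 2*a3*b2 - 2*a2*b3 - a4*b1 = 0 := by
    linear_combination (h 0 1 - h 0 (-1)) / 2
  have exy : 4*(a0*b2) - 4*(a2*b0) = 0 := by
    linear_combination h 1 1 - h 1 0 - h 0 1 + h 0 0
  -- Plücker identity on columns (0,1,2,3) forces a2*b3 - a3*b2 = 0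
  have hm23 : a2*b3 - a3*b2 = 0 := by
    linear_combination (-(a2*b3 - a3*b2))*exx + ((a1*b3 - a3*b1)/2)*exy
      + (-(a0*b3 - a3*b0))*eyy
  -- hence a1*b4 - a4*b1 = 0
  have hm14 : a1*b4 - a4*b1 = 0 := by
    linear_combination ey + 2*hm23
  -- Plücker identity on columns (0,1,3,4) gives the contradiction
  have key : 1 + 4*(a0*b4 - a4*b0)^2 = 0 := by
    linear_combination (-(a3*b4 - a4*b3))*exx + (-1)*e6
      + (2*(a0*b4 - a4*b0))*ex + (2*(a0*b3 - a3*b0))*hm14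
  nlinarith [sq_nonneg (a0*b4 - a4*b0), key]
end

section
/- Let F be a quadratic map of the plane such that det DF(x,y) ≠ 0 for all (x,y) ∈ ℝ² (i.e., the critical set J₀ is empty). Then det DF is constant: there exists a nonzero real number c with det DF(x,y) = c for all (x,y) ∈ ℝ². -/
/-!
The gradients of the two components of `F` are affine maps whose linear parts are the Hessians.
If either Hessian were invertible, that gradient, and with it `det DF`, would vanish somewhere;
so both Hessians are singular. A quadratic polynomial in two variables whose quadratic form has
positive discriminant has a real zero, and for `det DF` with singular Hessians that discriminant is
the square `4 (2a₀b₂ + 2a₂b₀ - a₁b₁)²`. Hence it vanishes, which kills the whole quadratic part of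
`det DF`; what remains is an affine function without zeros, i.e. a nonzero constant.
-/

lemma exists_quadratic_nonneg_of_pos {a : ℝ} (ha : 0 < a) (b c : ℝ) :
    ∃ y : ℝ, 0 ≤ a * (y * y) + b * y + c := by
  by_contra! h
  have hdisc := discrim_lt_zero_of_neg ha.ne' h
  have hc : c < 0 := by simpa using h 0
  rw [discrim] at hdisc
  nlinarith [sq_nonneg b]

lemma exists_quadratic₂_eq_zero {A B C D E K : ℝ} (hdisc : 0 < B ^ 2 - 4 * A * C) :
    ∃ x y : ℝ, A * x ^ 2 + B * (x * y) + C * y ^ 2 + D * x + E * y + K = 0 := by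
  rcases eq_or_ne A 0 with rfl | hA
  · have hB : B ≠ 0 := by rintro rfl; simp at hdisc
    set y := (1 - D) / B
    have hy : B * y + D = 1 := by rw [mul_div_cancel₀ _ hB]; ring
    exact ⟨-(C * y ^ 2 + E * y + K), y, by linear_combination (-(C * y ^ 2 + E * y + K)) * hy⟩
  · -- on a horizontal line, the discriminant in `x` is a quadratic in `y` with leading
    -- coefficient `B² - 4AC`
    obtain ⟨y, hy⟩ :=
      exists_quadratic_nonneg_of_pos hdisc (2 * B * D - 4 * A * E) (D ^ 2 - 4 * A * K)
    obtain ⟨x, hx⟩ := exists_quadratic_eq_zero (b := B * y + D) (c := C * y ^ 2 + E * y + K) hA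
      ⟨√(discrim A (B * y + D) (C * y ^ 2 + E * y + K)),
        (Real.mul_self_sqrt (by rw [discrim]; linear_combination hy)).symm⟩
    exact ⟨x, y, by linear_combination hx⟩

lemma exists_affine₂_eq_zero {a b c d : ℝ} (hdet : a * d - b * c ≠ 0) (e f : ℝ) :
    ∃ x y : ℝ, a * x + b * y + e = 0 ∧ c * x + d * y + f = 0 := by
  refine ⟨(b * f - d * e) / (a * d - b * c), (c * e - a * f) / (a * d - b * c), ?_, ?_⟩ <;>
  · apply mul_left_cancel₀ hdet
    field_simp
    ring

lemma eq_zero_of_forall_affine_ne_zero {D K : ℝ} (h : ∀ x : ℝ, D * x + K ≠ 0) : D = 0 := by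
  by_contra hD
  exact h (-K / D) (by field_simp; ring)

lemma hessian_det_eq_zero_of_jacobian_ne_zero (a0 a1 a2 a3 a4 b0 b1 b2 b3 b4 : ℝ)
    (hdet : ∀ x y : ℝ,
      (2*a0*x + a1*y + a3) * (b1*x + 2*b2*y + b4)
        - (a1*x + 2*a2*y + a4) * (2*b0*x + b1*y + b3) ≠ 0) :
    4 * a0 * a2 - a1 ^ 2 = 0 := by
  by_contra hne
  obtain ⟨x, y, hx, hy⟩ :=
    exists_affine₂_eq_zero (a := 2 * a0) (b := a1) (c := a1) (d := 2 * a2)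
      (by contrapose! hne; linear_combination hne) a3 a4
  exact hdet x y (by linear_combination (b1*x + 2*b2*y + b4) * hx - (2*b0*x + b1*y + b3) * hy)

lemma quadratic_part_eq_zero {a0 a1 a2 b0 b1 b2 : ℝ}
    (ha : 4 * a0 * a2 - a1 ^ 2 = 0) (hb : 4 * b0 * b2 - b1 ^ 2 = 0)
    (hmixed : 2 * a0 * b2 + 2 * a2 * b0 - a1 * b1 = 0) :
    a0 * b1 - a1 * b0 = 0 ∧ a0 * b2 - a2 * b0 = 0 ∧ a1 * b2 - a2 * b1 = 0 := by
  have h01 : a0 * b1 - a1 * b0 = 0 := pow_eq_zero_iff two_ne_zero |>.mp <| by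
    linear_combination -b0 ^ 2 * ha - a0 ^ 2 * hb + 2 * a0 * b0 * hmixed
  have h12 : a1 * b2 - a2 * b1 = 0 := pow_eq_zero_iff two_ne_zero |>.mp <| by
    linear_combination -b2 ^ 2 * ha - a2 ^ 2 * hb + 2 * a2 * b2 * hmixed
  have h02 : a0 * b2 - a2 * b0 = 0 := pow_eq_zero_iff two_ne_zero |>.mp <| by
    linear_combination
      (a0 * b2 + a2 * b0 + a1 * b1 / 2) / 2 * hmixed - b0 * b2 * ha - a1 ^ 2 / 4 * hb
  exact ⟨h01, h02, h12⟩

theorem stmt18_general (a0 a1 a2 a3 a4 b0 b1 b2 b3 b4 : ℝ)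
    (hdet : ∀ x y : ℝ,
      (2*a0*x + a1*y + a3) * (b1*x + 2*b2*y + b4)
        - (a1*x + 2*a2*y + a4) * (2*b0*x + b1*y + b3) ≠ 0) :
    ∃ c : ℝ, c ≠ 0 ∧ ∀ x y : ℝ,
      (2*a0*x + a1*y + a3) * (b1*x + 2*b2*y + b4)
        - (a1*x + 2*a2*y + a4) * (2*b0*x + b1*y + b3) = c := by
  have ha := hessian_det_eq_zero_of_jacobian_ne_zero a0 a1 a2 a3 a4 b0 b1 b2 b3 b4 hdet
  have hb := hessian_det_eq_zero_of_jacobian_ne_zero b0 b1 b2 b3 b4 a0 a1 a2 a3 a4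
    fun x y h => hdet x y (by linear_combination -h)
  have hdisc :
      (4 * (a0 * b2 - a2 * b0)) ^ 2 - 4 * (2 * (a0 * b1 - a1 * b0)) * (2 * (a1 * b2 - a2 * b1))
        ≤ 0 := not_lt.1 fun h => by
    obtain ⟨x, y, hxy⟩ := exists_quadratic₂_eq_zero (D := 2*a0*b4 + a3*b1 - a1*b3 - 2*a4*b0)
      (E := a1*b4 + 2*a3*b2 - 2*a2*b3 - a4*b1) (K := a3*b4 - a4*b3) h
    exact hdet x y (by linear_combination hxy)
  have hdisc_eq :
      (4 * (a0 * b2 - a2 * b0)) ^ 2 - 4 * (2 * (a0 * b1 - a1 * b0)) * (2 * (a1 * b2 - a2 * b1))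
        = 4 * (2 * a0 * b2 + 2 * a2 * b0 - a1 * b1) ^ 2 := by
    linear_combination 4 * (b1 ^ 2 - 4 * b0 * b2) * ha
  have hmixed : 2 * a0 * b2 + 2 * a2 * b0 - a1 * b1 = 0 := pow_eq_zero_iff two_ne_zero |>.mp <|
    le_antisymm (by linarith) (sq_nonneg _)
  obtain ⟨h01, h02, h12⟩ := quadratic_part_eq_zero ha hb hmixed
  have hx := eq_zero_of_forall_affine_ne_zero (D := 2*a0*b4 + a3*b1 - a1*b3 - 2*a4*b0)
    (K := a3*b4 - a4*b3) fun x hx => hdet x 0 (by linear_combination 2 * x ^ 2 * h01 + hx)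
  have hy := eq_zero_of_forall_affine_ne_zero (D := a1*b4 + 2*a3*b2 - 2*a2*b3 - a4*b1)
    (K := a3*b4 - a4*b3) fun y hy => hdet 0 y (by linear_combination 2 * y ^ 2 * h12 + hy)
  refine ⟨a3 * b4 - a4 * b3, fun h => hdet 0 0 (by linear_combination h), fun x y => ?_⟩
  linear_combination 2 * x ^ 2 * h01 + 4 * (x * y) * h02 + 2 * y ^ 2 * h12 + x * hx + y * hy

/-- if a quadratic map of the plane has nowhere-vanishing Jacobian
determinant (empty critical set), then the Jacobian determinant is a nonzero
constant. -/
theorem stmt18 (a0 a1 a2 a3 a4 a5 b0 b1 b2 b3 b4 b5 : ℝ)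
    (hdet : ∀ x y : ℝ,
      (2*a0*x + a1*y + a3) * (b1*x + 2*b2*y + b4)
        - (a1*x + 2*a2*y + a4) * (2*b0*x + b1*y + b3) ≠ 0) :
    ∃ c : ℝ, c ≠ 0 ∧ ∀ x y : ℝ,
      (2*a0*x + a1*y + a3) * (b1*x + 2*b2*y + b4)
        - (a1*x + 2*a2*y + a4) * (2*b0*x + b1*y + b3) = c :=
  stmt18_general a0 a1 a2 a3 a4 b0 b1 b2 b3 b4 hdet
end
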